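/- arXiv:1808.00131 — 14 statements merged into one kernel-verified Lean document; each statement's English description precedes it below -/
import Mathlib

section
/- Let n ≥ 1 and let P be a symmetric prior on Finset (Fin n) (i.e., a probability mass function P : Finset (Fin n) → ℝ with P T ≥ 0, ∑_T P T = 1, and P T depending only on the cardinality |T|). Suppose that for every payoff function v : Finset (Fin n) → ℝ the D-values sum to the grand performance: ∑_{i} ψ_i[v;P] = v(univ) − v(∅). Then (a) for every payoff function v and every i, ψ_i[v;P] equals the Shapley value Φ_i[v], and (b) there exists a real number η such that P T = (|T|)!·(n−|T|)!/(n+1)! + (−1)^{|T|}·η for every T ⊆ Fin n. -/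
open Finset

noncomputable section

/-- Expected marginal gain γ_i[v;P]. -/
def gainD (n : ℕ) (v P : Finset (Fin n) → ℝ) (i : Fin n) : ℝ :=
  ∑ T ∈ univ.filter (fun T : Finset (Fin n) => i ∈ T), P T * (v T - v (T.erase i))

/-- Expected marginal loss λ_i[v;P]. -/
def lossD (n : ℕ) (v P : Finset (Fin n) → ℝ) (i : Fin n) : ℝ :=
  ∑ T ∈ univ.filter (fun T : Finset (Fin n) => i ∉ T), P T * (v (insert i T) - v T)

/-- The D-value ψ_i[v;P]. -/
def dVal (n : ℕ) (v P : Finset (Fin n) → ℝ) (i : Fin n) : ℝ :=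
  gainD n v P i + lossD n v P i

/-- The Shapley value Φ_i[v]. -/
def shapley (n : ℕ) (v : Finset (Fin n) → ℝ) (i : Fin n) : ℝ :=
  ∑ T ∈ univ.filter (fun T : Finset (Fin n) => i ∈ T),
    ((Nat.factorial (T.card - 1) * Nat.factorial (n - T.card) : ℝ) / (Nat.factorial n : ℝ))
      * (v T - v (T.erase i))

/-! Efficiency tested on the indicator payoffs `Pi.single Z 1` yields, for a symmetric prior
`P T = p |T|`, the equations `n (p 1 + p 0) = 1` and `k (p k + p (k-1)) = (n-k) (p (k+1) + p k)`
for `0 < k < n`. These determine the pair sums `p k + p (k-1)` as the Shapley weights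
`(k-1)! (n-k)! / n!`; since `P S + P (S \ {i})` is the weight of `v S - v (S \ {i})` in `ψ_i`,
this is (a). The prior `k! (n-k)! / (n+1)!` has the same pair sums, so `p` differs from it by a
solution of `d k + d (k-1) = 0`, which is (b). -/

open scoped Nat

theorem Finset.sum_filter_mem_erase_eq_sum_filter_notMem {α M : Type*} [Fintype α]
    [DecidableEq α] [AddCommMonoid M] (i : α) (f : Finset α → Finset α → M) :
    ∑ S ∈ univ.filter (i ∈ ·), f S (S.erase i) = ∑ T ∈ univ.filter (i ∉ ·), f (insert i T) T := by
  refine (sum_nbij' (insert i) (·.erase i) ?_ ?_ ?_ ?_ ?_).symm <;>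
    simp +contextual [insert_erase]

theorem Finset.exists_eq_comp_card {α β : Type*} (f : Finset α → β)
    (hf : ∀ T Z : Finset α, T.card = Z.card → f T = f Z) :
    ∃ g : ℕ → β, ∀ T, f T = g T.card := by
  classical
  refine ⟨fun k => if h : ∃ S : Finset α, S.card = k then f h.choose else f ∅, fun T => ?_⟩
  have h : ∃ S : Finset α, S.card = T.card := ⟨T, rfl⟩
  dsimp only
  rw [dif_pos h]
  exact hf _ _ h.choose_spec.symm

lemma dVal_eq_sum (n : ℕ) (v P : Finset (Fin n) → ℝ) (i : Fin n) :
    dVal n v P i = ∑ S ∈ univ.filter (i ∈ ·), (P S + P (S.erase i)) * (v S - v (S.erase i)) := by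
  rw [dVal, gainD, lossD,
    ← sum_filter_mem_erase_eq_sum_filter_notMem i fun S T => P T * (v S - v T), ← sum_add_distrib]
  simp only [add_mul]

lemma dVal_single (n : ℕ) (P : Finset (Fin n) → ℝ) (Z : Finset (Fin n)) (i : Fin n) :
    dVal n (Pi.single Z 1) P i =
      if i ∈ Z then P Z + P (Z.erase i) else -(P (insert i Z) + P Z) := by
  rw [dVal_eq_sum]
  simp only [mul_sub, sum_sub_distrib, Pi.single_apply, mul_ite, mul_one, mul_zero]
  rw [sum_filter_mem_erase_eq_sum_filter_notMem i fun S T => if T = Z then P S + P T else 0,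
    sum_ite_eq', sum_ite_eq']
  simp only [mem_filter, mem_univ, true_and]
  split_ifs <;> ring

lemma sum_dVal_single {n : ℕ} {P : Finset (Fin n) → ℝ} {p : ℕ → ℝ} (hp : ∀ T, P T = p T.card)
    (Z : Finset (Fin n)) :
    ∑ i, dVal n (Pi.single Z 1) P i =
      Z.card * (p Z.card + p (Z.card - 1)) - (n - Z.card : ℕ) * (p (Z.card + 1) + p Z.card) := by
  have hterm : ∀ i, dVal n (Pi.single Z 1) P i =
      if i ∈ Z then p Z.card + p (Z.card - 1) else -(p (Z.card + 1) + p Z.card) := by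
    intro i
    rw [dVal_single]
    split_ifs with hi
    · rw [hp, hp, card_erase_of_mem hi]
    · rw [hp, hp Z, card_insert_of_notMem hi]
  simp only [hterm, sum_ite, sum_const, nsmul_eq_mul, filter_mem_eq_inter,
    univ_inter, filter_notMem_eq_sdiff, ← compl_eq_univ_sdiff, card_compl, Fintype.card_fin]
  ring

lemma pairSum_eq_of_recurrence {n : ℕ} {p : ℕ → ℝ}
    (h : ∀ k ≤ n, (k : ℝ) * (p k + p (k - 1)) - (n - k : ℕ) * (p (k + 1) + p k) =
      (if k = n then 1 else 0) - (if k = 0 then 1 else 0)) :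
    ∀ s < n, p (s + 1) + p s = s ! * (n - (s + 1))! / n ! := by
  intro s hs
  induction s with
  | zero =>
    have h0 := h 0 (Nat.zero_le n)
    simp only [if_neg hs.ne, ↓reduceIte, Nat.cast_zero, zero_mul, Nat.sub_zero, zero_add] at h0
    rw [Nat.factorial_zero, ← Nat.mul_factorial_pred hs.ne']
    push_cast
    field_simp
    linarith
  | succ s ih =>
    obtain ⟨m, rfl⟩ : ∃ m, n = s + 2 + m := ⟨n - (s + 2), by omega⟩
    have hs1 := h (s + 1) (by omega)
    rw [if_neg (by omega), if_neg (by omega), Nat.add_sub_cancel, ih (by omega),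
      show s + 2 + m - (s + 1) = m + 1 by omega] at hs1
    rw [show s + 2 + m - (s + 1 + 1) = m by omega]
    have hm : (m + 1 : ℝ) ≠ 0 := by positivity
    apply mul_left_cancel₀ hm
    push_cast at hs1
    rw [show ((m : ℝ) + 1) * (p (s + 1 + 1) + p (s + 1)) =
      (s + 1) * (s ! * (m + 1)! / (s + 2 + m)!) by linarith]
    push_cast [Nat.factorial_succ]
    ring

lemma dVal_eq_shapley_of_pairSum {n : ℕ} {P : Finset (Fin n) → ℝ} {p : ℕ → ℝ}
    (hp : ∀ T, P T = p T.card) (hpair : ∀ s < n, p (s + 1) + p s = s ! * (n - (s + 1))! / n !)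
    (v : Finset (Fin n) → ℝ) (i : Fin n) : dVal n v P i = shapley n v i := by
  rw [dVal_eq_sum, shapley]
  refine sum_congr rfl fun S hS => ?_
  have hi : i ∈ S := (mem_filter.1 hS).2
  obtain ⟨s, hs⟩ : ∃ s, S.card = s + 1 := ⟨_, (Nat.succ_pred_eq_of_pos (card_pos.2 ⟨i, hi⟩)).symm⟩
  have hsn : s < n := by simpa [hs] using card_le_univ S
  rw [hp, hp, card_erase_of_mem hi, hs, Nat.add_sub_cancel, hpair s hsn]

theorem eq_add_neg_one_pow_mul_of_add_eq {n : ℕ} {p b : ℕ → ℝ}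
    (h : ∀ s < n, p (s + 1) + p s = b (s + 1) + b s) :
    ∀ k ≤ n, p k = b k + (-1) ^ k * (p 0 - b 0) := by
  intro k hk
  induction k with
  | zero => ring
  | succ k ih =>
    have hk' := h k hk
    rw [ih (by omega)] at hk'
    rw [pow_succ]
    linarith

def shapleyPrior (n k : ℕ) : ℝ := (k ! * (n - k)! : ℝ) / (n + 1)!

lemma shapleyPrior_succ_add {n s : ℕ} (hs : s < n) :
    shapleyPrior n (s + 1) + shapleyPrior n s = s ! * (n - (s + 1))! / n ! := by
  obtain ⟨m, rfl⟩ : ∃ m, n = s + 1 + m := ⟨n - (s + 1), by omega⟩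
  rw [shapleyPrior, shapleyPrior, show s + 1 + m - (s + 1) = m by omega,
    show s + 1 + m - s = m + 1 by omega]
  push_cast [Nat.factorial_succ]
  field_simp
  ring

theorem stmt_0_general (n : ℕ) (P : Finset (Fin n) → ℝ)
    (hsym : ∀ T Z : Finset (Fin n), T.card = Z.card → P T = P Z)
    (heff : ∀ v : Finset (Fin n) → ℝ, ∑ i : Fin n, dVal n v P i = v univ - v ∅) :
    (∀ (v : Finset (Fin n) → ℝ) (i : Fin n), dVal n v P i = shapley n v i) ∧
    ∃ η : ℝ, ∀ T : Finset (Fin n),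
      P T = (Nat.factorial T.card * Nat.factorial (n - T.card) : ℝ)
              / (Nat.factorial (n + 1) : ℝ) + (-1 : ℝ) ^ T.card * η := by
  obtain ⟨p, hp⟩ := exists_eq_comp_card P hsym
  have hrec : ∀ k ≤ n, (k : ℝ) * (p k + p (k - 1)) - (n - k : ℕ) * (p (k + 1) + p k) =
      (if k = n then 1 else 0) - (if k = 0 then 1 else 0) := by
    intro k hk
    obtain ⟨Z, -, rfl⟩ := exists_subset_card_eq (s := (univ : Finset (Fin n))) (by simpa using hk)
    rw [← sum_dVal_single hp, heff]
    simp only [Pi.single_apply, eq_comm (a := univ), eq_comm (a := ∅), ← card_eq_iff_eq_univ,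
      Fintype.card_fin, card_eq_zero]
  have hpair := pairSum_eq_of_recurrence hrec
  refine ⟨dVal_eq_shapley_of_pairSum hp hpair, p 0 - shapleyPrior n 0, fun T => ?_⟩
  have hpair' : ∀ s < n, p (s + 1) + p s = shapleyPrior n (s + 1) + shapleyPrior n s :=
    fun s hs => (hpair s hs).trans (shapleyPrior_succ_add hs).symm
  rw [hp, eq_add_neg_one_pow_mul_of_add_eq hpair' T.card (by simpa using card_le_univ T)]
  rfl

theorem stmt_0 (n : ℕ) (hn : 1 ≤ n) (P : Finset (Fin n) → ℝ)
    (hP0 : ∀ T : Finset (Fin n), 0 ≤ P T)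
    (hP1 : ∑ T : Finset (Fin n), P T = 1)
    (hsym : ∀ T Z : Finset (Fin n), T.card = Z.card → P T = P Z)
    (heff : ∀ v : Finset (Fin n) → ℝ, ∑ i : Fin n, dVal n v P i = v univ - v ∅) :
    (∀ (v : Finset (Fin n) → ℝ) (i : Fin n), dVal n v P i = shapley n v i) ∧
    ∃ η : ℝ, ∀ T : Finset (Fin n),
      P T = (Nat.factorial T.card * Nat.factorial (n - T.card) : ℝ)
              / (Nat.factorial (n + 1) : ℝ) + (-1 : ℝ) ^ T.card * η :=
  stmt_0_general n P hsym heff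
end
end

section
/- Let n ≥ 1 and η ∈ ℝ, and suppose P : Finset (Fin n) → ℝ is a probability mass function given by P T = (|T|)!·(n−|T|)!/(n+1)! + (−1)^{|T|}·η for every T ⊆ Fin n (with P T ≥ 0 for all T and ∑_T P T = 1). Then for every payoff function v : Finset (Fin n) → ℝ and every i, the D-value ψ_i[v;P] equals the Shapley value Φ_i[v]. -/
open Finset

noncomputable section

/-! Reindexing the marginal loss by `T ↦ insert i T` writes ψ_i as a sum over the
coalitions `T ∋ i` of `(P T + P (T \ {i})) · (v T − v (T \ {i}))`. The `η`-terms of `P T` and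
`P (T \ {i})` carry opposite signs and cancel, and the two factorial terms add up to the
Shapley weight `(|T|−1)!·(n−|T|)!/n!`. -/

theorem lossD_eq_sum_erase (n : ℕ) (v P : Finset (Fin n) → ℝ) (i : Fin n) :
    lossD n v P i = ∑ T ∈ univ.filter (fun T : Finset (Fin n) => i ∈ T),
      P (T.erase i) * (v T - v (T.erase i)) := by
  refine sum_nbij' (insert i) (fun T => T.erase i) ?_ ?_ ?_ ?_ ?_ <;>
    intro T hT <;> simp only [mem_filter, mem_univ, true_and] at hT ⊢
  · exact mem_insert_self i T
  · exact notMem_erase i T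
  · exact erase_insert hT
  · exact insert_erase hT
  · rw [erase_insert hT]

theorem dVal_eq_sum_mem (n : ℕ) (v P : Finset (Fin n) → ℝ) (i : Fin n) :
    dVal n v P i = ∑ T ∈ univ.filter (fun T : Finset (Fin n) => i ∈ T),
      (P T + P (T.erase i)) * (v T - v (T.erase i)) := by
  simp only [dVal, gainD, lossD_eq_sum_erase, ← sum_add_distrib, add_mul]

theorem dVal_eq_shapley_of_add_erase (n : ℕ) (v P : Finset (Fin n) → ℝ) (i : Fin n)
    (hP : ∀ T : Finset (Fin n), i ∈ T → P T + P (T.erase i) =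
      (Nat.factorial (T.card - 1) * Nat.factorial (n - T.card) : ℝ) / (Nat.factorial n : ℝ)) :
    dVal n v P i = shapley n v i := by
  rw [dVal_eq_sum_mem, shapley]
  refine sum_congr rfl fun T hT => ?_
  rw [hP T (mem_filter.1 hT).2]

theorem factorial_div_add_factorial_div (n k : ℕ) (hk : k < n) :
    ((k + 1).factorial * (n - (k + 1)).factorial : ℝ) / (n + 1).factorial
      + (k.factorial * (n - k).factorial : ℝ) / (n + 1).factorial
      = (k.factorial * (n - (k + 1)).factorial : ℝ) / n.factorial := by
  obtain ⟨m, rfl⟩ := Nat.exists_eq_add_of_lt hk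
  rw [show k + m + 1 - (k + 1) = m by omega, show k + m + 1 - k = m + 1 by omega]
  simp only [Nat.factorial_succ (k + m + 1), Nat.factorial_succ k, Nat.factorial_succ m]
  push_cast
  field_simp
  ring

theorem stmt_1_general (n : ℕ) (η : ℝ) (P : Finset (Fin n) → ℝ)
    (hP : ∀ T : Finset (Fin n),
      P T = (Nat.factorial T.card * Nat.factorial (n - T.card) : ℝ)
              / (Nat.factorial (n + 1) : ℝ) + (-1 : ℝ) ^ T.card * η)
    (v : Finset (Fin n) → ℝ) (i : Fin n) :
    dVal n v P i = shapley n v i := by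
  refine dVal_eq_shapley_of_add_erase n v P i fun T hT => ?_
  have hcard : T.card = (T.erase i).card + 1 := (card_erase_add_one hT).symm
  have hlt : (T.erase i).card < n := by
    have := card_le_univ T
    rw [Fintype.card_fin] at this
    omega
  rw [hP, hP, hcard, Nat.add_sub_cancel, ← factorial_div_add_factorial_div n _ hlt, pow_succ]
  ring

theorem stmt_1 (n : ℕ) (hn : 1 ≤ n) (η : ℝ) (P : Finset (Fin n) → ℝ)
    (hP : ∀ T : Finset (Fin n),
      P T = (Nat.factorial T.card * Nat.factorial (n - T.card) : ℝ)
              / (Nat.factorial (n + 1) : ℝ) + (-1 : ℝ) ^ T.card * η)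
    (hP0 : ∀ T : Finset (Fin n), 0 ≤ P T)
    (hP1 : ∑ T : Finset (Fin n), P T = 1)
    (v : Finset (Fin n) → ℝ) (i : Fin n) :
    dVal n v P i = shapley n v i :=
  stmt_1_general n η P hP v i
end
end

section
/- Let n ≥ 1 and let P : Finset (Fin n) → ℝ be a probability mass function (P T ≥ 0, ∑_T P T = 1). If for every payoff function v : Finset (Fin n) → ℝ and every i the D-value ψ_i[v;P] equals the Banzhaf value b_i[v], then there exists a real number η with |η| ≤ 1/2^n such that P T = 1/2^n + (−1)^{|T|}·η for every T ⊆ Fin n. -/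
open Finset

noncomputable section

/-- The Banzhaf value b_i[v]. -/
def banzhaf (n : ℕ) (v : Finset (Fin n) → ℝ) (i : Fin n) : ℝ :=
  (1 / (2 : ℝ) ^ (n - 1)) *
    ∑ T ∈ univ.filter (fun T : Finset (Fin n) => i ∈ T), (v T - v (T.erase i))

/-
Testing the identity ψ_i[v;P] = b_i[v] on the game v = 1_{S} with i ∈ S gives
P S + P (S \ {i}) = 1/2^(n-1) = 2/2^n. Along any chain ∅ ⊂ {i₁} ⊂ {i₁,i₂} ⊂ … this recursion forces
P T = 1/2^n + (-1)^|T| η with η = P ∅ - 1/2^n, and P ∅ ≥ 0, P {i} ≥ 0 give |η| ≤ 1/2^n.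
-/

section Alternating

variable {α : Type*} [DecidableEq α]

theorem eq_add_neg_one_pow_card_mul_of_add_erase_eq {f : Finset α → ℝ} {c : ℝ}
    (hf : ∀ S i, i ∈ S → f S + f (S.erase i) = 2 * c) (T : Finset α) :
    f T = c + (-1) ^ T.card * (f ∅ - c) := by
  induction T using Finset.induction_on with
  | empty => simp
  | @insert i T hiT ih =>
    have h := hf (insert i T) i (mem_insert_self i T)
    rw [erase_insert hiT, ih] at h
    rw [card_insert_of_notMem hiT, pow_succ]
    linear_combination h

end Alternating

section IndicatorGame

variable {n : ℕ} {S : Finset (Fin n)} {i : Fin n}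

theorem sum_mul_marginal_single (w : Finset (Fin n) → ℝ) (hi : i ∈ S) :
    ∑ T ∈ univ.filter (fun T : Finset (Fin n) => i ∈ T),
      w T * ((Pi.single S 1 : Finset (Fin n) → ℝ) T -
        (Pi.single S 1 : Finset (Fin n) → ℝ) (T.erase i)) = w S := by
  have herase : ∀ T : Finset (Fin n), T.erase i ≠ S := fun T h => notMem_erase i T (h ▸ hi)
  rw [sum_eq_single S]
  · simp [erase_ne_self.mpr hi]
  · intro T _ hTS
    simp [hTS, herase]
  · simp [hi]

theorem gainD_single (P : Finset (Fin n) → ℝ) (hi : i ∈ S) :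
    gainD n (Pi.single S 1) P i = P S :=
  sum_mul_marginal_single P hi

theorem banzhaf_single (hi : i ∈ S) :
    banzhaf n (Pi.single S 1) i = 1 / 2 ^ (n - 1) := by
  simpa [banzhaf] using sum_mul_marginal_single (fun _ => (1 : ℝ)) hi

theorem lossD_single (P : Finset (Fin n) → ℝ) (hi : i ∈ S) :
    lossD n (Pi.single S 1) P i = P (S.erase i) := by
  rw [lossD, sum_eq_single (S.erase i)]
  · simp [insert_erase hi, erase_ne_self.mpr hi]
  · intro T hT hTS
    rw [mem_filter] at hT
    have hTS' : T ≠ S := fun h => hT.2 (h ▸ hi)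
    have hinsert : insert i T ≠ S := fun h => hTS (by rw [← h, erase_insert hT.2])
    simp [hTS', hinsert]
  · simp

theorem dVal_single_s3 (P : Finset (Fin n) → ℝ) (hi : i ∈ S) :
    dVal n (Pi.single S 1) P i = P S + P (S.erase i) := by
  rw [dVal, gainD_single P hi, lossD_single P hi]

end IndicatorGame

theorem stmt_3_general (n : ℕ) (hn : 1 ≤ n) (P : Finset (Fin n) → ℝ)
    (hP0 : ∀ T : Finset (Fin n), 0 ≤ P T)
    (hbv : ∀ (v : Finset (Fin n) → ℝ) (i : Fin n), dVal n v P i = banzhaf n v i) :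
    ∃ η : ℝ, |η| ≤ 1 / 2 ^ n ∧
      ∀ T : Finset (Fin n), P T = 1 / (2 : ℝ) ^ n + (-1 : ℝ) ^ T.card * η := by
  have hhalf : (1 : ℝ) / 2 ^ (n - 1) = 2 * (1 / 2 ^ n) := by
    obtain ⟨m, rfl⟩ := Nat.exists_eq_add_of_le' hn
    field_simp
    simp [pow_succ]
  have hadd : ∀ S i, i ∈ S → P S + P (S.erase i) = 2 * (1 / 2 ^ n) := fun S i hi => by
    rw [← dVal_single_s3 P hi, hbv, banzhaf_single hi, hhalf]
  have hP := eq_add_neg_one_pow_card_mul_of_add_erase_eq hadd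
  refine ⟨P ∅ - 1 / 2 ^ n, abs_le.mpr ⟨?_, ?_⟩, hP⟩
  · linarith [hP0 ∅]
  · have h := hP0 {⟨0, hn⟩}
    rw [hP, card_singleton, pow_one] at h
    linarith

theorem stmt_3 (n : ℕ) (hn : 1 ≤ n) (P : Finset (Fin n) → ℝ)
    (hP0 : ∀ T : Finset (Fin n), 0 ≤ P T)
    (hP1 : ∑ T : Finset (Fin n), P T = 1)
    (hbv : ∀ (v : Finset (Fin n) → ℝ) (i : Fin n), dVal n v P i = banzhaf n v i) :
    ∃ η : ℝ, |η| ≤ 1 / 2 ^ n ∧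
      ∀ T : Finset (Fin n), P T = 1 / (2 : ℝ) ^ n + (-1 : ℝ) ^ T.card * η :=
  stmt_3_general n hn P hP0 hbv
end
end

section
/- Let n ≥ 1, η ∈ (0,1), and let P : Finset (Fin n) → ℝ be the binomial prior P T = η^{|T|}·(1−η)^{n−|T|}. Then for every payoff function v : Finset (Fin n) → ℝ and every i: ψ_i[v;P] = (1/η)·γ_i[v;P] = (1/(1−η))·λ_i[v;P] = ∑_{T ⊆ Fin n, i ∈ T} η^{|T|−1}·(1−η)^{n−|T|}·(v T − v (T \ {i})). -/
/-!
For `i ∈ T` put `w T = η ^ (|T| - 1) * (1 - η) ^ (n - |T|)`. The binomial prior satisfies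
`P T = η * w T` and `P (T \ {i}) = (1 - η) * w T`. Reindexing the loss sum by `T ↦ T ∪ {i}`
therefore gives `γ_i = η * S` and `λ_i = (1 - η) * S` with `S = ∑_{T ∋ i} w T * (v T - v (T \ {i}))`,
so `ψ_i = S`.
-/

open Finset

noncomputable section

def weightedMarginal (n : ℕ) (v w : Finset (Fin n) → ℝ) (i : Fin n) : ℝ :=
  ∑ T ∈ univ.filter (fun T : Finset (Fin n) => i ∈ T), w T * (v T - v (T.erase i))

section WeightedMarginal

variable {n : ℕ} (v : Finset (Fin n) → ℝ) (i : Fin n)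

theorem gainD_eq_weightedMarginal (P : Finset (Fin n) → ℝ) :
    gainD n v P i = weightedMarginal n v P i :=
  rfl

theorem lossD_eq_weightedMarginal_erase (P : Finset (Fin n) → ℝ) :
    lossD n v P i = weightedMarginal n v (fun T => P (T.erase i)) i := by
  refine sum_nbij' (insert i) (erase · i) ?_ ?_ ?_ ?_ ?_
  · simp
  · simp
  · intro T hT
    exact erase_insert (mem_filter.1 hT).2
  · intro T hT
    exact insert_erase (mem_filter.1 hT).2
  · intro T hT
    dsimp only
    rw [erase_insert (mem_filter.1 hT).2]

theorem weightedMarginal_eq_mul {w w' : Finset (Fin n) → ℝ} (c : ℝ)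
    (h : ∀ T, i ∈ T → w T = c * w' T) :
    weightedMarginal n v w i = c * weightedMarginal n v w' i := by
  rw [weightedMarginal, weightedMarginal, mul_sum]
  refine sum_congr rfl fun T hT => ?_
  rw [h T (mem_filter.1 hT).2, mul_assoc]

end WeightedMarginal

section Binomial

variable {n : ℕ} (η : ℝ) {i : Fin n} {T : Finset (Fin n)}

theorem binomial_eq_mul_of_mem (hi : i ∈ T) :
    η ^ T.card * (1 - η) ^ (n - T.card) =
      η * (η ^ (T.card - 1) * (1 - η) ^ (n - T.card)) := by
  rw [← mul_assoc, ← pow_succ', Nat.sub_add_cancel (card_pos.2 ⟨i, hi⟩)]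

theorem binomial_erase_eq_mul_of_mem (hi : i ∈ T) :
    η ^ (T.erase i).card * (1 - η) ^ (n - (T.erase i).card) =
      (1 - η) * (η ^ (T.card - 1) * (1 - η) ^ (n - T.card)) := by
  have hpos : 0 < T.card := card_pos.2 ⟨i, hi⟩
  have hle : T.card ≤ n := by simpa using card_le_univ T
  rw [card_erase_of_mem hi, mul_left_comm, ← pow_succ']
  congr 2
  omega

end Binomial

theorem stmt_4_general (n : ℕ) (η : ℝ) (hη : η ∈ Set.Ioo (0 : ℝ) 1)
    (P : Finset (Fin n) → ℝ)
    (hP : ∀ T : Finset (Fin n), P T = η ^ T.card * (1 - η) ^ (n - T.card))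
    (v : Finset (Fin n) → ℝ) (i : Fin n) :
    dVal n v P i = (1 / η) * gainD n v P i ∧
    dVal n v P i = (1 / (1 - η)) * lossD n v P i ∧
    dVal n v P i = ∑ T ∈ univ.filter (fun T : Finset (Fin n) => i ∈ T),
      η ^ (T.card - 1) * (1 - η) ^ (n - T.card) * (v T - v (T.erase i)) := by
  set S := weightedMarginal n v (fun T => η ^ (T.card - 1) * (1 - η) ^ (n - T.card)) i
  have hgain : gainD n v P i = η * S := by
    rw [gainD_eq_weightedMarginal]
    exact weightedMarginal_eq_mul v i η fun T hi => by rw [hP, binomial_eq_mul_of_mem η hi]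
  have hloss : lossD n v P i = (1 - η) * S := by
    rw [lossD_eq_weightedMarginal_erase]
    exact weightedMarginal_eq_mul v i (1 - η) fun T hi => by
      rw [hP, binomial_erase_eq_mul_of_mem η hi]
  have hdVal : dVal n v P i = S := by
    rw [dVal, hgain, hloss]
    ring
  have hη0 : η ≠ 0 := hη.1.ne'
  have hη1 : 1 - η ≠ 0 := sub_ne_zero.2 hη.2.ne'
  refine ⟨?_, ?_, hdVal⟩
  · rw [hdVal, hgain, one_div, inv_mul_cancel_left₀ hη0]
  · rw [hdVal, hloss, one_div, inv_mul_cancel_left₀ hη1]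

theorem stmt_4 (n : ℕ) (hn : 1 ≤ n) (η : ℝ) (hη : η ∈ Set.Ioo (0 : ℝ) 1)
    (P : Finset (Fin n) → ℝ)
    (hP : ∀ T : Finset (Fin n), P T = η ^ T.card * (1 - η) ^ (n - T.card))
    (v : Finset (Fin n) → ℝ) (i : Fin n) :
    dVal n v P i = (1 / η) * gainD n v P i ∧
    dVal n v P i = (1 / (1 - η)) * lossD n v P i ∧
    dVal n v P i = ∑ T ∈ univ.filter (fun T : Finset (Fin n) => i ∈ T),
      η ^ (T.card - 1) * (1 - η) ^ (n - T.card) * (v T - v (T.erase i)) :=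
  stmt_4_general n η hη P hP v i
end
end

section
/- Let n ≥ 1 and let P be a symmetric prior on Finset (Fin n) (a probability mass function with P T depending only on |T|). Then the identity ∑_{i} λ_i[v;P] = (∑_{T ⊆ Fin n} P T · v T) − v(∅) holds for every payoff function v : Finset (Fin n) → ℝ if and only if P T = (|T|)!·(n−|T|)!/(n+1)! for every T ⊆ Fin n. -/
open Finset

noncomputable section

/-!
Summing the marginal losses over `i` turns `∑ i, λ_i[v;P]` into the linear form
`∑ S, c_P(S) v(S)` with `c_P(S) = ∑_{i ∈ S} P(S \ i) - (n - |S|) P(S)`. Comparing coefficients,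
the identity holds for every `v` iff `c_P(S) = P(S) - [S = ∅]` for all `S`, that is
`(n - |S| + 1) P(S) = [S = ∅] + ∑_{i ∈ S} P(S \ i)`. This recursion in `|S|` has exactly one
solution, and the weights `|S|! (n - |S|)! / (n + 1)!` satisfy it.
-/

namespace Finset

variable {α β : Type*} [DecidableEq α] [Fintype α] [AddCommMonoid β]

theorem sum_filter_notMem_insert_eq_sum_filter_mem_erase (i : α)
    (f : Finset α → Finset α → β) :
    ∑ T ∈ univ.filter (i ∉ ·), f T (insert i T) = ∑ S ∈ univ.filter (i ∈ ·), f (S.erase i) S := by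
  apply sum_nbij' (insert i) (erase · i) <;> intro T hT <;> simp_all

theorem sum_sum_filter_mem_eq_sum_sum (g : α → Finset α → β) :
    ∑ i, ∑ S ∈ univ.filter (i ∈ ·), g i S = ∑ S, ∑ i ∈ S, g i S :=
  sum_comm' (by simp)

theorem sum_sum_filter_notMem_eq_sum_card_compl_nsmul (g : Finset α → β) :
    ∑ i, ∑ T ∈ univ.filter (i ∉ ·), g T = ∑ T, #Tᶜ • g T := by
  rw [sum_comm' (t' := univ) (s' := fun T => Tᶜ) (by simp)]
  simp

end Finset

theorem Fintype.sum_mul_eq_sum_mul_iff {α : Type*} [Fintype α] [DecidableEq α] (f g : α → ℝ) :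
    (∀ v : α → ℝ, ∑ a, f a * v a = ∑ a, g a * v a) ↔ f = g := by
  refine ⟨fun h => funext fun a => ?_, fun h _ => h ▸ rfl⟩
  simpa [Pi.single_apply] using h (Pi.single a 1)

section MarginalCoeff

variable {α : Type*} [Fintype α] [DecidableEq α]

def marginalCoeff (P : Finset α → ℝ) (S : Finset α) : ℝ :=
  ∑ i ∈ S, P (S.erase i) - #Sᶜ * P S

theorem eq_of_marginalCoeff_sub_eq {P Q : Finset α → ℝ}
    (h : ∀ S, marginalCoeff P S - P S = marginalCoeff Q S - Q S) : P = Q := by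
  funext S
  induction S using Finset.strongInduction with
  | H S ih =>
    have hsum : ∑ i ∈ S, P (S.erase i) = ∑ i ∈ S, Q (S.erase i) :=
      sum_congr rfl fun i hi => ih _ (erase_ssubset hi)
    have hS := h S
    rw [marginalCoeff, marginalCoeff, hsum] at hS
    have hpos : (#Sᶜ + 1 : ℝ) ≠ 0 := by positivity
    exact mul_left_cancel₀ hpos (by linarith)

end MarginalCoeff

theorem sum_lossD_eq_sum_marginalCoeff_mul (n : ℕ) (v P : Finset (Fin n) → ℝ) :
    ∑ i, lossD n v P i = ∑ S, marginalCoeff P S * v S := by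
  simp only [lossD, mul_sub, sum_sub_distrib,
    sum_filter_notMem_insert_eq_sum_filter_mem_erase _ (fun T S => P T * v S),
    sum_sum_filter_mem_eq_sum_sum (fun i S => P (S.erase i) * v S),
    sum_sum_filter_notMem_eq_sum_card_compl_nsmul (fun T => P T * v T), marginalCoeff]
  rw [← sum_sub_distrib]
  refine sum_congr rfl fun S _ => ?_
  rw [sub_mul, sum_mul, nsmul_eq_mul, mul_assoc]

/-- `1 / ((n + 1) * n.choose |S|)`: the size of `S` is uniform on `{0, …, n}` and, given its size,
`S` is uniform. -/
def uniformCardPrior (n : ℕ) (S : Finset (Fin n)) : ℝ :=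
  (Nat.factorial S.card * Nat.factorial (n - S.card) : ℝ) / (Nat.factorial (n + 1) : ℝ)

theorem marginalCoeff_uniformCardPrior {n : ℕ} (S : Finset (Fin n)) :
    marginalCoeff (uniformCardPrior n) S = uniformCardPrior n S - if S = ∅ then 1 else 0 := by
  rcases S.eq_empty_or_nonempty with rfl | hne
  · have hfac : (Nat.factorial (n + 1) : ℝ) ≠ 0 := by positivity
    simp only [marginalCoeff, uniformCardPrior, sum_empty, compl_empty, card_univ,
      Fintype.card_fin, card_empty, Nat.factorial_zero, Nat.sub_zero, if_true, Nat.factorial_succ]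
    push_cast
    field_simp
    ring
  · obtain ⟨k, hk⟩ : ∃ k, #S = k + 1 := Nat.exists_eq_add_one.mpr hne.card_pos
    obtain ⟨m, hm⟩ : ∃ m, n = k + 1 + m := Nat.exists_eq_add_of_le
      (hk ▸ (card_le_univ S).trans_eq (Fintype.card_fin n))
    have hsum : ∑ i ∈ S, uniformCardPrior n (S.erase i)
        = (k + 1) * ((Nat.factorial k * Nat.factorial (m + 1) : ℝ) / Nat.factorial (n + 1)) := by
      rw [sum_congr rfl fun i hi => by rw [uniformCardPrior, card_erase_of_mem hi], sum_const, hk,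
        nsmul_eq_mul, Nat.add_sub_cancel, show n - k = m + 1 by omega]
      push_cast
      ring
    rw [marginalCoeff, hsum, card_compl, Fintype.card_fin, uniformCardPrior, hk,
      if_neg hne.ne_empty, show n - (k + 1) = m by omega]
    simp only [Nat.factorial_succ]
    push_cast
    ring

theorem stmt_5_general (n : ℕ) (P : Finset (Fin n) → ℝ) :
    (∀ v : Finset (Fin n) → ℝ,
        ∑ i : Fin n, lossD n v P i = (∑ T : Finset (Fin n), P T * v T) - v ∅) ↔
    (∀ T : Finset (Fin n),
        P T = (Nat.factorial T.card * Nat.factorial (n - T.card) : ℝ)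
                / (Nat.factorial (n + 1) : ℝ)) := by
  have hperf : ∀ v : Finset (Fin n) → ℝ,
      (∑ T, P T * v T) - v ∅ = ∑ T, (P T - if T = ∅ then 1 else 0) * v T := by
    simp [sub_mul, sum_sub_distrib]
  simp_rw [sum_lossD_eq_sum_marginalCoeff_mul, hperf, Fintype.sum_mul_eq_sum_mul_iff]
  change _ ↔ ∀ T, P T = uniformCardPrior n T
  rw [← funext_iff]
  constructor
  · intro h
    refine eq_of_marginalCoeff_sub_eq fun S => ?_
    rw [congrFun h S, marginalCoeff_uniformCardPrior]
    ring
  · rintro rfl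
    exact funext marginalCoeff_uniformCardPrior

theorem stmt_5 (n : ℕ) (hn : 1 ≤ n) (P : Finset (Fin n) → ℝ)
    (hP0 : ∀ T : Finset (Fin n), 0 ≤ P T)
    (hP1 : ∑ T : Finset (Fin n), P T = 1)
    (hsym : ∀ T Z : Finset (Fin n), T.card = Z.card → P T = P Z) :
    (∀ v : Finset (Fin n) → ℝ,
        ∑ i : Fin n, lossD n v P i = (∑ T : Finset (Fin n), P T * v T) - v ∅) ↔
    (∀ T : Finset (Fin n),
        P T = (Nat.factorial T.card * Nat.factorial (n - T.card) : ℝ)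
                / (Nat.factorial (n + 1) : ℝ)) :=
  stmt_5_general n P
end
end

section
/- Let n ≥ 1 and let P be a symmetric prior on Finset (Fin n) (a probability mass function with P T depending only on |T|). Then the identity ∑_{i} γ_i[v;P] = (∑_{T ⊆ Fin n} P T · v T) − v(∅) holds for every payoff function v : Finset (Fin n) → ℝ if and only if P assigns total probability 1 to subsets of cardinality at most 1, i.e., ∑_{T : |T| ≤ 1} P T = 1. -/
open Finset

noncomputable section

/-
Summing the gains over players gives `∑_T P T · ∑_{i ∈ T} (v T − v (T \ {i}))`, while the right-hand
side is `∑_T P T · (v T − v ∅)` because `P` has total mass one. For `|T| ≤ 1` the two inner terms agree,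
which gives one direction. Conversely, testing with `v T = |T|²` the inner terms differ by
`|T| (|T| − 1)`, which is nonnegative and vanishes exactly when `|T| ≤ 1`; so the identity forces
`P T = 0` whenever `|T| ≥ 2`.
-/

lemma sum_filter_eq_one_iff {α : Type*} [Fintype α] (f : α → ℝ) (p : α → Prop) [DecidablePred p]
    (hf0 : ∀ a, 0 ≤ f a) (hf1 : ∑ a, f a = 1) :
    ∑ a ∈ univ.filter p, f a = 1 ↔ ∀ a, ¬ p a → f a = 0 := by
  have hcompl : ∑ a ∈ univ.filter p, f a = 1 ↔ ∑ a ∈ univ.filter (fun a => ¬ p a), f a = 0 := by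
    rw [← sum_filter_add_sum_filter_not univ p f] at hf1
    constructor <;> intro h <;> linarith
  rw [hcompl, sum_eq_zero_iff_of_nonneg fun a _ => hf0 a]
  simp

lemma sum_gainD_eq (n : ℕ) (v P : Finset (Fin n) → ℝ) :
    ∑ i, gainD n v P i = ∑ T, P T * ∑ i ∈ T, (v T - v (T.erase i)) := by
  simp only [gainD, sum_filter, mul_sum]
  rw [sum_comm]
  simp only [← sum_filter, filter_mem_eq_inter, univ_inter]

lemma sum_gainD_sub_eq (n : ℕ) (v P : Finset (Fin n) → ℝ) (hP1 : ∑ T, P T = 1) :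
    ∑ i, gainD n v P i - (∑ T, P T * v T - v ∅)
      = ∑ T, P T * (∑ i ∈ T, (v T - v (T.erase i)) - (v T - v ∅)) := by
  simp only [sum_gainD_eq, mul_sub, sum_sub_distrib, ← sum_mul, hP1, one_mul]

lemma sum_sub_erase_of_card_le_one {α : Type*} [DecidableEq α] (v : Finset α → ℝ)
    {T : Finset α} (hT : T.card ≤ 1) :
    ∑ i ∈ T, (v T - v (T.erase i)) = v T - v ∅ := by
  rcases Nat.le_one_iff_eq_zero_or_eq_one.1 hT with h | h
  · simp [card_eq_zero.1 h]
  · obtain ⟨a, rfl⟩ := card_eq_one.1 h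
    simp

lemma sum_sub_erase_card_sq {α : Type*} [DecidableEq α] (T : Finset α) :
    ∑ i ∈ T, ((T.card : ℝ) ^ 2 - ((T.erase i).card : ℝ) ^ 2)
        - ((T.card : ℝ) ^ 2 - ((∅ : Finset α).card : ℝ) ^ 2)
      = ((T.card * (T.card - 1) : ℕ) : ℝ) := by
  rcases T.eq_empty_or_nonempty with rfl | hT
  · simp
  have hpos : 1 ≤ T.card := hT.card_pos
  have hterm : ∀ i ∈ T, (T.card : ℝ) ^ 2 - ((T.erase i).card : ℝ) ^ 2 = 2 * T.card - 1 := by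
    intro i hi
    rw [card_erase_of_mem hi, Nat.cast_sub hpos]
    ring
  rw [sum_congr rfl hterm, sum_const, nsmul_eq_mul]
  push_cast [Nat.cast_sub hpos, card_empty]
  ring

theorem stmt_6_general (n : ℕ) (P : Finset (Fin n) → ℝ)
    (hP0 : ∀ T : Finset (Fin n), 0 ≤ P T)
    (hP1 : ∑ T : Finset (Fin n), P T = 1) :
    (∀ v : Finset (Fin n) → ℝ,
        ∑ i : Fin n, gainD n v P i = (∑ T : Finset (Fin n), P T * v T) - v ∅) ↔
    (∑ T ∈ univ.filter (fun T : Finset (Fin n) => T.card ≤ 1), P T = 1) := by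
  rw [sum_filter_eq_one_iff P _ hP0 hP1]
  simp only [← sub_eq_zero (a := ∑ i, gainD n _ P i), sum_gainD_sub_eq n _ P hP1]
  constructor
  · intro h T hT
    have hdefect := h fun S => (S.card : ℝ) ^ 2
    simp only [sum_sub_erase_card_sq] at hdefect
    have hzero := (sum_eq_zero_iff_of_nonneg fun S _ => mul_nonneg (hP0 S) (Nat.cast_nonneg _)).1
      hdefect T (mem_univ T)
    have hpos : (0 : ℝ) < ((T.card * (T.card - 1) : ℕ) : ℝ) := by
      exact_mod_cast Nat.mul_pos (by omega) (by omega)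
    exact (mul_eq_zero.1 hzero).resolve_right hpos.ne'
  · intro hP v
    refine sum_eq_zero fun T _ => ?_
    rcases le_or_gt T.card 1 with hT | hT
    · rw [sum_sub_erase_of_card_le_one v hT, sub_self, mul_zero]
    · rw [hP T hT.not_ge, zero_mul]

theorem stmt_6 (n : ℕ) (hn : 1 ≤ n) (P : Finset (Fin n) → ℝ)
    (hP0 : ∀ T : Finset (Fin n), 0 ≤ P T)
    (hP1 : ∑ T : Finset (Fin n), P T = 1)
    (hsym : ∀ T Z : Finset (Fin n), T.card = Z.card → P T = P Z) :
    (∀ v : Finset (Fin n) → ℝ,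
        ∑ i : Fin n, gainD n v P i = (∑ T : Finset (Fin n), P T * v T) - v ∅) ↔
    (∑ T ∈ univ.filter (fun T : Finset (Fin n) => T.card ≤ 1), P T = 1) :=
  stmt_6_general n P hP0 hP1
end
end

section
/- Let n ≥ 1 and let P : Finset (Fin n) → ℝ be a probability mass function. Then the endowment bias κ_i[v;P] equals 0 for every payoff function v : Finset (Fin n) → ℝ and every i if and only if P T = 1/2^n for every T ⊆ Fin n. -/
open Finset

noncomputable section

/-- The endowment bias κ_i[v;P]. -/
def biasD (n : ℕ) (v P : Finset (Fin n) → ℝ) (i : Fin n) : ℝ :=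
  gainD n v P i - lossD n v P i

/-! Pairing each coalition `T ∌ i` with `insert i T` gives
`κ_i[v;P] = ∑_{T ∌ i} (P (T ∪ {i}) - P T) (v (T ∪ {i}) - v T)`. Hence `κ_i[·;P]` vanishes
identically iff `P` is invariant under adding any player, i.e. `P` is constant; the test payoff
`v S = P S - P (S \ {i})` turns `κ_i[v;P]` into a sum of squares. Constancy and total mass 1 on
the `2^n` coalitions force the value `2^{-n}`. -/

theorem Finset.sum_filter_mem_eq_sum_filter_notMem_insert {α M : Type*} [Fintype α]
    [DecidableEq α] [AddCommMonoid M] (i : α) (f : Finset α → M) :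
    ∑ T ∈ univ.filter (fun T => i ∈ T), f T = ∑ T ∈ univ.filter (fun T => i ∉ T), f (insert i T) :=
  sum_nbij' (erase · i) (insert i) (by simp) (by simp)
    (fun T hT => insert_erase (mem_filter.mp hT).2)
    (fun T hT => erase_insert (mem_filter.mp hT).2)
    (fun T hT => by rw [insert_erase (mem_filter.mp hT).2])

theorem biasD_eq_sum (n : ℕ) (v P : Finset (Fin n) → ℝ) (i : Fin n) :
    biasD n v P i = ∑ T ∈ univ.filter (fun T : Finset (Fin n) => i ∉ T),
      (P (insert i T) - P T) * (v (insert i T) - v T) := by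
  rw [biasD, gainD, lossD, sum_filter_mem_eq_sum_filter_notMem_insert, ← sum_sub_distrib]
  refine sum_congr rfl fun T hT => ?_
  rw [erase_insert (mem_filter.mp hT).2]
  ring

theorem biasD_eq_zero_iff (n : ℕ) (P : Finset (Fin n) → ℝ) (i : Fin n) :
    (∀ v, biasD n v P i = 0) ↔ ∀ T, i ∉ T → P (insert i T) = P T := by
  constructor
  · intro h T hiT
    have hsq : ∑ S ∈ univ.filter (fun S : Finset (Fin n) => i ∉ S),
        (P (insert i S) - P S) * (P (insert i S) - P S) = 0 := by
      rw [← h (fun S => P S - P (S.erase i)), biasD_eq_sum]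
      refine sum_congr rfl fun S hS => ?_
      rw [erase_insert_eq_erase, erase_eq_of_notMem (mem_filter.mp hS).2, sub_self, sub_zero]
    rw [sum_eq_zero_iff_of_nonneg fun S _ => mul_self_nonneg _] at hsq
    exact sub_eq_zero.mp (mul_self_eq_zero.mp (hsq T (by simpa using hiT)))
  · intro h v
    rw [biasD_eq_sum]
    exact sum_eq_zero fun T hT => by rw [h T (mem_filter.mp hT).2, sub_self, zero_mul]

theorem Finset.eq_apply_empty_of_apply_insert_eq {α β : Type*} [DecidableEq α]
    (f : Finset α → β) (hf : ∀ i T, i ∉ T → f (insert i T) = f T) (T : Finset α) :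
    f T = f ∅ := by
  induction T using Finset.induction_on with
  | empty => rfl
  | insert i T hiT ih => rw [hf i T hiT, ih]

theorem stmt_9_general (n : ℕ) (P : Finset (Fin n) → ℝ)
    (hP1 : ∑ T : Finset (Fin n), P T = 1) :
    (∀ (v : Finset (Fin n) → ℝ) (i : Fin n), biasD n v P i = 0) ↔
    (∀ T : Finset (Fin n), P T = 1 / (2 : ℝ) ^ n) := by
  simp only [forall_comm (α := Finset (Fin n) → ℝ), biasD_eq_zero_iff]
  constructor
  · intro h T
    have hconst := eq_apply_empty_of_apply_insert_eq P h
    rw [sum_congr rfl fun S _ => hconst S, sum_const, card_univ, Fintype.card_finset,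
      Fintype.card_fin, nsmul_eq_mul] at hP1
    rw [hconst, eq_div_iff (by positivity), mul_comm]
    exact_mod_cast hP1
  · intro h i T _
    rw [h, h]

theorem stmt_9 (n : ℕ) (hn : 1 ≤ n) (P : Finset (Fin n) → ℝ)
    (hP0 : ∀ T : Finset (Fin n), 0 ≤ P T)
    (hP1 : ∑ T : Finset (Fin n), P T = 1) :
    (∀ (v : Finset (Fin n) → ℝ) (i : Fin n), biasD n v P i = 0) ↔
    (∀ T : Finset (Fin n), P T = 1 / (2 : ℝ) ^ n) :=
  stmt_9_general n P hP1
end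
end

section
/- Let n ≥ 1 and let P be a symmetric prior on Finset (Fin n) (a probability mass function with P T depending only on |T|). Then the aggregate endowment bias ∑_{i} κ_i[v;P] equals 0 for every payoff function v : Finset (Fin n) → ℝ if and only if P T = 1/2^n for every T ⊆ Fin n. -/
/-!
With `T ∆ {i}` the set obtained by toggling player `i`, the bias is
`κ_i[v;P] = ∑_T P T * (v T - v (T ∆ {i}))`. Taking `v = P` and symmetrising over the involution
`T ↦ T ∆ {i}` turns the aggregate bias into half the Dirichlet energy
`∑_i ∑_T (P T - P (T ∆ {i}))²` of `P` on the hypercube. So it vanishes only if `P` is invariant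
under every toggle, i.e. constant, and normalisation forces the constant to be `1 / 2^n`.
Conversely, for constant `P` each `κ_i` is a sum of differences that cancel under the involution.
-/

open Finset

noncomputable section

open scoped symmDiff

namespace Finset

variable {α : Type*} [DecidableEq α] {s : Finset α} {a : α}

lemma symmDiff_singleton_of_mem (h : a ∈ s) : s ∆ {a} = s.erase a := by
  ext; grind [mem_symmDiff]

lemma symmDiff_singleton_of_notMem (h : a ∉ s) : s ∆ {a} = insert a s := by
  ext; grind [mem_symmDiff]

lemma symmDiff_singleton_involutive (a : α) : Function.Involutive (· ∆ ({a} : Finset α)) :=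
  fun _ => symmDiff_symmDiff_cancel_right _ _

lemma apply_eq_apply_empty_of_forall_apply_symmDiff_singleton {β : Type*} {f : Finset α → β}
    (hf : ∀ s a, f (s ∆ {a}) = f s) (s : Finset α) : f s = f ∅ := by
  induction s using Finset.induction_on with
  | empty => rfl
  | insert a s ha ih => rw [← symmDiff_singleton_of_notMem ha, hf, ih]

end Finset

section Involution

variable {α : Type*} [Fintype α] {σ : α → α}

lemma Function.Involutive.sum_sub_comp (hσ : Function.Involutive σ) (f : α → ℝ) :
    ∑ a, (f a - f (σ a)) = 0 := by
  rw [Finset.sum_sub_distrib, hσ.bijective.sum_comp f, sub_self]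

lemma Function.Involutive.two_mul_sum_mul_sub_comp (hσ : Function.Involutive σ) (f : α → ℝ) :
    2 * ∑ a, f a * (f a - f (σ a)) = ∑ a, (f a - f (σ a)) ^ 2 := by
  have hswap : ∑ a, f (σ a) * (f (σ a) - f a) = ∑ a, f a * (f a - f (σ a)) := by
    simpa only [hσ _] using hσ.bijective.sum_comp fun a => f a * (f a - f (σ a))
  calc 2 * ∑ a, f a * (f a - f (σ a))
      = ∑ a, f a * (f a - f (σ a)) + ∑ a, f (σ a) * (f (σ a) - f a) := by rw [hswap, two_mul]
    _ = ∑ a, (f a - f (σ a)) ^ 2 := by rw [← Finset.sum_add_distrib]; congr 1; ext; ring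

end Involution

lemma biasD_eq_sum_mul_sub (n : ℕ) (v P : Finset (Fin n) → ℝ) (i : Fin n) :
    biasD n v P i = ∑ T, P T * (v T - v (T ∆ {i})) := by
  rw [← sum_filter_add_sum_filter_not univ (i ∈ ·), biasD, gainD, lossD, sub_eq_add_neg,
    ← sum_neg_distrib]
  congr 1
  · exact sum_congr rfl fun T hT => by rw [symmDiff_singleton_of_mem (mem_filter.1 hT).2]
  · refine sum_congr rfl fun T hT => ?_
    rw [symmDiff_singleton_of_notMem (mem_filter.1 hT).2]
    ring

theorem stmt_10_general (n : ℕ) (P : Finset (Fin n) → ℝ)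
    (hP1 : ∑ T : Finset (Fin n), P T = 1) :
    (∀ v : Finset (Fin n) → ℝ, ∑ i : Fin n, biasD n v P i = 0) ↔
    (∀ T : Finset (Fin n), P T = 1 / (2 : ℝ) ^ n) := by
  constructor
  · intro H
    have henergy : ∑ i : Fin n, ∑ T, (P T - P (T ∆ {i})) ^ 2 = 0 := by
      simp_rw [← (symmDiff_singleton_involutive _).two_mul_sum_mul_sub_comp P, ← mul_sum,
        ← biasD_eq_sum_mul_sub, H P, mul_zero]
    have hflip : ∀ T i, P (T ∆ {i}) = P T := fun T i => by
      have hsq := (sum_eq_zero_iff_of_nonneg fun _ _ => sum_nonneg fun _ _ => sq_nonneg _).1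
        henergy i (mem_univ _)
      have hterm := (sum_eq_zero_iff_of_nonneg fun _ _ => sq_nonneg _).1 hsq T (mem_univ _)
      exact (sub_eq_zero.1 (pow_eq_zero_iff two_ne_zero |>.1 hterm)).symm
    have hconst := apply_eq_apply_empty_of_forall_apply_symmDiff_singleton hflip
    have hmass : (2 : ℝ) ^ n * P ∅ = 1 := by
      rw [← hP1, sum_congr rfl fun T _ => hconst T, sum_const, card_univ, Fintype.card_finset,
        Fintype.card_fin, nsmul_eq_mul]
      push_cast; rfl
    intro T
    rw [hconst T, eq_div_iff (by positivity), mul_comm, hmass]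
  · intro hP v
    simp only [biasD_eq_sum_mul_sub, hP, ← mul_sum,
      (symmDiff_singleton_involutive _).sum_sub_comp, mul_zero, sum_const_zero]

theorem stmt_10 (n : ℕ) (hn : 1 ≤ n) (P : Finset (Fin n) → ℝ)
    (hP0 : ∀ T : Finset (Fin n), 0 ≤ P T)
    (hP1 : ∑ T : Finset (Fin n), P T = 1)
    (hsym : ∀ T Z : Finset (Fin n), T.card = Z.card → P T = P Z) :
    (∀ v : Finset (Fin n) → ℝ, ∑ i : Fin n, biasD n v P i = 0) ↔
    (∀ T : Finset (Fin n), P T = 1 / (2 : ℝ) ^ n) :=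
  stmt_10_general n P hP1
end
end

section
/- Let n ≥ 1 and let v : Finset (Fin n) → ℝ be a payoff function. Then π_t(v) = ω_{t+1}(v) for every t = 0, 1, …, n−1. Consequently, the following are equivalent: (1) ω_t(v) ≥ π_t(v) for all t = 1, …, n−1 (v has a diminishing marginal effect); (2) ω_t(v) is a decreasing function of t on {1,…,n} (v has a diminishing marginal gain); (3) π_t(v) is a decreasing function of t on {0,…,n−1} (v has a diminishing marginal loss). -/
/-! Both `π_t` and `ω_{t+1}` sum `v S - v T` over the pairs `T ⊂ S` with `|T| = t`, `|S| = t + 1`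
(counted once by the added player, once by the removed one), with the same weight
`t! (n-t-1)! / n!`. Hence `π_t = ω_{t+1}`, and each of the three conditions says that
`ω_t ≥ ω_{t+1}` for `1 ≤ t ≤ n - 1`. -/

open Finset

noncomputable section

/-- Average marginal gain ω_t(v) at coalition size t. -/
def omegaD (n : ℕ) (v : Finset (Fin n) → ℝ) (t : ℕ) : ℝ :=
  ((Nat.factorial (t - 1) * Nat.factorial (n - t) : ℝ) / (Nat.factorial n : ℝ)) *
    ∑ T ∈ univ.filter (fun T : Finset (Fin n) => T.card = t),
      ∑ i ∈ T, (v T - v (T.erase i))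

/-- Average marginal loss π_t(v) at coalition size t. -/
def piD (n : ℕ) (v : Finset (Fin n) → ℝ) (t : ℕ) : ℝ :=
  ((Nat.factorial t * Nat.factorial (n - t - 1) : ℝ) / (Nat.factorial n : ℝ)) *
    ∑ T ∈ univ.filter (fun T : Finset (Fin n) => T.card = t),
      ∑ j ∈ Tᶜ, (v (insert j T) - v T)

variable {α M : Type*} [Fintype α] [DecidableEq α] [AddCommMonoid M]

theorem sum_card_sum_compl_insert_eq_sum_card_succ_sum_erase (t : ℕ)
    (F : Finset α → Finset α → M) :
    ∑ T ∈ univ.filter (fun T : Finset α => T.card = t), ∑ j ∈ Tᶜ, F (insert j T) T =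
      ∑ S ∈ univ.filter (fun S : Finset α => S.card = t + 1), ∑ i ∈ S, F S (S.erase i) := by
  rw [sum_sigma', sum_sigma']
  refine sum_nbij' (fun p => ⟨insert p.2 p.1, p.2⟩) (fun p => ⟨p.1.erase p.2, p.2⟩)
    ?_ ?_ ?_ ?_ ?_
  all_goals
    rintro ⟨T, j⟩ hp
    simp only [mem_sigma, mem_filter, mem_univ, true_and, mem_compl] at hp ⊢
  · exact ⟨by rw [card_insert_of_notMem hp.2, hp.1], mem_insert_self j T⟩
  · exact ⟨by rw [card_erase_of_mem hp.2, hp.1, Nat.add_sub_cancel], notMem_erase j T⟩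
  · simp [erase_insert hp.2]
  · simp [insert_erase hp.2]
  · simp [erase_insert hp.2]

theorem piD_eq_omegaD_succ (n : ℕ) (v : Finset (Fin n) → ℝ) (t : ℕ) :
    piD n v t = omegaD n v (t + 1) := by
  rw [piD, omegaD, sum_card_sum_compl_insert_eq_sum_card_succ_sum_erase t
    (fun S T => v S - v T), Nat.add_sub_cancel, Nat.sub_sub]

theorem stmt_11_general (n : ℕ) (v : Finset (Fin n) → ℝ) :
    (∀ t : ℕ, t ≤ n - 1 → piD n v t = omegaD n v (t + 1)) ∧
    ((∀ t : ℕ, 1 ≤ t → t ≤ n - 1 → omegaD n v t ≥ piD n v t) ↔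
      (∀ t : ℕ, 1 ≤ t → t + 1 ≤ n → omegaD n v t ≥ omegaD n v (t + 1))) ∧
    ((∀ t : ℕ, 1 ≤ t → t ≤ n - 1 → omegaD n v t ≥ piD n v t) ↔
      (∀ t : ℕ, t + 1 ≤ n - 1 → piD n v t ≥ piD n v (t + 1))) := by
  simp only [piD_eq_omegaD_succ]
  refine ⟨fun _ _ => trivial,
    ⟨fun h t ht₁ _ => h t ht₁ (by omega), fun h t ht₁ _ => h t ht₁ (by omega)⟩,
    ⟨fun h t _ => h (t + 1) (by omega) (by omega), fun h t ht₁ _ => ?_⟩⟩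
  obtain ⟨s, rfl⟩ := Nat.exists_eq_add_of_le' ht₁
  exact h s (by omega)

theorem stmt_11 (n : ℕ) (hn : 1 ≤ n) (v : Finset (Fin n) → ℝ) :
    (∀ t : ℕ, t ≤ n - 1 → piD n v t = omegaD n v (t + 1)) ∧
    ((∀ t : ℕ, 1 ≤ t → t ≤ n - 1 → omegaD n v t ≥ piD n v t) ↔
      (∀ t : ℕ, 1 ≤ t → t + 1 ≤ n → omegaD n v t ≥ omegaD n v (t + 1))) ∧
    ((∀ t : ℕ, 1 ≤ t → t ≤ n - 1 → omegaD n v t ≥ piD n v t) ↔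
      (∀ t : ℕ, t + 1 ≤ n - 1 → piD n v t ≥ piD n v (t + 1))) :=
  stmt_11_general n v
end
end

section
/- Let n ≥ 1 and let P : Finset (Fin n) → ℝ be the prior P T = (|T|)!·(n−|T|)!/(n+1)!. If the payoff function v : Finset (Fin n) → ℝ has a diminishing marginal effect (ω_t(v) ≥ π_t(v) for all t = 1, …, n−1), then the aggregate endowment bias satisfies ∑_{i} κ_i[v;P] ≤ 0. -/
/-!
Summing κ_i over the players and grouping coalitions by size, the total endowment bias
telescopes to `∑_{t=1}^n (P_t − P_{t−1}) S_t`, where `S_t` is the total marginal gain over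
coalitions of size `t` and `P_t` the prior weight of such a coalition. For this prior
`(P_t − P_{t−1}) S_t = ω_t (2t − n − 1)/(n + 1)`, and these weights increase in `t` and sum to zero.
Since `ω_{t+1} = π_t`, diminishing marginal effect says `ω` is nonincreasing, so Chebyshev's sum
inequality bounds the total by `(∑ ω_t)(∑ weights)/n = 0`.
-/

open Finset

noncomputable section

theorem sum_card_mul_eq_sum_range {α : Type*} [Fintype α] (p : ℕ → ℝ) (g : Finset α → ℝ) :
    ∑ T : Finset α, p T.card * g T
      = ∑ t ∈ range (Fintype.card α + 1), p t * ∑ T ∈ univ.filter (fun T => T.card = t), g T := by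
  rw [← sum_fiberwise_of_maps_to (g := card) (t := range (Fintype.card α + 1))
    fun T _ => mem_range_succ_iff.mpr (card_le_univ T)]
  refine sum_congr rfl fun t _ => ?_
  rw [mul_sum]
  exact sum_congr rfl fun T hT => by rw [(mem_filter.mp hT).2]

section MarginalSums

variable (n : ℕ) (v : Finset (Fin n) → ℝ)

def gainSum (t : ℕ) : ℝ :=
  ∑ T ∈ univ.filter (fun T : Finset (Fin n) => T.card = t), ∑ i ∈ T, (v T - v (T.erase i))

def lossSum (t : ℕ) : ℝ :=
  ∑ T ∈ univ.filter (fun T : Finset (Fin n) => T.card = t), ∑ j ∈ Tᶜ, (v (insert j T) - v T)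

theorem gainSum_zero : gainSum n v 0 = 0 :=
  sum_eq_zero fun T hT => by simp [card_eq_zero.mp (mem_filter.mp hT).2]

theorem gainSum_eq_zero_of_lt (t : ℕ) (ht : n < t) : gainSum n v t = 0 :=
  sum_eq_zero fun T hT => absurd (card_le_univ T) (by simp_all)

theorem lossSum_eq_gainSum_succ (t : ℕ) : lossSum n v t = gainSum n v (t + 1) := by
  unfold gainSum lossSum
  rw [sum_sigma' _ (fun T => Tᶜ) (fun T j => v (insert j T) - v T),
    sum_sigma' _ (fun T => T) (fun T i => v T - v (T.erase i))]
  refine sum_bij' (fun p _ => ⟨insert p.2 p.1, p.2⟩) (fun p _ => ⟨p.1.erase p.2, p.2⟩)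
    ?_ ?_ ?_ ?_ ?_
  · rintro ⟨S, j⟩ hp
    simp only [mem_sigma, mem_filter, mem_univ, true_and, mem_compl] at hp ⊢
    exact ⟨by rw [card_insert_of_notMem hp.2, hp.1], mem_insert_self _ _⟩
  · rintro ⟨T, i⟩ hp
    simp only [mem_sigma, mem_filter, mem_univ, true_and, mem_compl] at hp ⊢
    exact ⟨by rw [card_erase_of_mem hp.2, hp.1, Nat.add_sub_cancel], notMem_erase _ _⟩
  · rintro ⟨S, j⟩ hp
    simp only [mem_sigma, mem_filter, mem_univ, true_and, mem_compl] at hp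
    simp [erase_insert hp.2]
  · rintro ⟨T, i⟩ hp
    simp only [mem_sigma, mem_filter, mem_univ, true_and] at hp
    simp [insert_erase hp.2]
  · rintro ⟨S, j⟩ hp
    simp only [mem_sigma, mem_filter, mem_univ, true_and, mem_compl] at hp
    simp [erase_insert hp.2]

theorem omegaD_succ_eq_piD (t : ℕ) : omegaD n v (t + 1) = piD n v t := by
  have h := lossSum_eq_gainSum_succ n v t
  unfold gainSum lossSum at h
  unfold omegaD piD
  rw [Nat.add_sub_cancel, ← h, Nat.sub_sub]

end MarginalSums

section SizeDependentPrior

variable (n : ℕ) (v : Finset (Fin n) → ℝ) (p : ℕ → ℝ)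

theorem sum_gainD_of_card :
    ∑ i, gainD n v (fun T => p T.card) i = ∑ t ∈ range (n + 1), p t * gainSum n v t := by
  have hswap : ∑ i, gainD n v (fun T => p T.card) i
      = ∑ T : Finset (Fin n), p T.card * ∑ i ∈ T, (v T - v (T.erase i)) := by
    simp only [gainD, sum_filter]
    rw [sum_comm]
    exact sum_congr rfl fun T _ => by rw [sum_ite_mem, univ_inter, mul_sum]
  rw [hswap, sum_card_mul_eq_sum_range, Fintype.card_fin]
  rfl

theorem sum_lossD_of_card :
    ∑ i, lossD n v (fun T => p T.card) i = ∑ t ∈ range (n + 1), p t * gainSum n v (t + 1) := by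
  have hswap : ∑ i, lossD n v (fun T => p T.card) i
      = ∑ T : Finset (Fin n), p T.card * ∑ j ∈ Tᶜ, (v (insert j T) - v T) := by
    simp only [lossD, sum_filter]
    rw [sum_comm]
    refine sum_congr rfl fun T _ => ?_
    simp only [← mem_compl]
    rw [sum_ite_mem, univ_inter, mul_sum]
  simp only [hswap, sum_card_mul_eq_sum_range, Fintype.card_fin, ← lossSum_eq_gainSum_succ]
  rfl

theorem sum_biasD_of_card :
    ∑ i, biasD n v (fun T => p T.card) i
      = ∑ t ∈ range n, (p (t + 1) - p t) * gainSum n v (t + 1) := by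
  simp only [biasD, sum_sub_distrib, sum_gainD_of_card, sum_lossD_of_card]
  rw [sum_range_succ', sum_range_succ _ n, gainSum_zero,
    gainSum_eq_zero_of_lt n v (n + 1) n.lt_succ_self]
  simp only [mul_zero, add_zero, ← sum_sub_distrib, sub_mul]

end SizeDependentPrior

section Prior

variable (n : ℕ)

def prior (t : ℕ) : ℝ :=
  (Nat.factorial t * Nat.factorial (n - t) : ℝ) / (Nat.factorial (n + 1) : ℝ)

def biasWeight (t : ℕ) : ℝ :=
  ((2 * t + 1 : ℝ) - n) / (n + 1)

theorem biasWeight_monotone : Monotone (biasWeight n) := fun s t hst => by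
  unfold biasWeight
  gcongr

theorem sum_biasWeight : ∑ t ∈ range n, biasWeight n t = 0 := by
  have h : ∀ m : ℕ, ∑ t ∈ range m, ((2 * t + 1 : ℝ) - n) = m * (m - n) := by
    intro m
    induction m with
    | zero => simp
    | succ m ih => rw [sum_range_succ, ih]; push_cast; ring
  simp only [biasWeight, ← sum_div, h, sub_self, mul_zero, zero_div]

theorem prior_succ_sub {t : ℕ} (ht : t < n) :
    prior n (t + 1) - prior n t
      = (Nat.factorial t * Nat.factorial (n - (t + 1)) : ℝ) / Nat.factorial n * biasWeight n t := by
  obtain ⟨k, rfl⟩ := Nat.exists_eq_add_of_lt ht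
  have hk : t + k + 1 - t = k + 1 := by omega
  have hk' : t + k + 1 - (t + 1) = k := by omega
  unfold prior biasWeight
  rw [hk, hk', Nat.factorial_succ k, Nat.factorial_succ t, Nat.factorial_succ (t + k + 1)]
  push_cast
  field_simp
  ring

theorem sum_biasD_prior (v : Finset (Fin n) → ℝ) :
    ∑ i, biasD n v (fun T => prior n T.card) i
      = ∑ t ∈ range n, omegaD n v (t + 1) * biasWeight n t := by
  rw [sum_biasD_of_card]
  refine sum_congr rfl fun t ht => ?_
  rw [prior_succ_sub n (mem_range.mp ht), omegaD, Nat.add_sub_cancel]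
  unfold gainSum
  ring

end Prior

theorem stmt_12 (n : ℕ) (hn : 1 ≤ n) (P : Finset (Fin n) → ℝ)
    (hP : ∀ T : Finset (Fin n),
      P T = (Nat.factorial T.card * Nat.factorial (n - T.card) : ℝ)
              / (Nat.factorial (n + 1) : ℝ))
    (v : Finset (Fin n) → ℝ)
    (hdim : ∀ t : ℕ, 1 ≤ t → t ≤ n - 1 → omegaD n v t ≥ piD n v t) :
    ∑ i : Fin n, biasD n v P i ≤ 0 := by
  have hP' : P = fun T => prior n T.card := funext hP
  have hω : AntitoneOn (fun t => omegaD n v (t + 1)) (range n) := by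
    rw [coe_range]
    refine antitoneOn_of_add_one_le Set.ordConnected_Iio fun t _ _ ht => ?_
    rw [omegaD_succ_eq_piD]
    exact hdim (t + 1) (by omega) (by simp at ht; omega)
  have hcheb :=
    (hω.antivaryOn ((biasWeight_monotone n).monotoneOn _)).card_mul_sum_le_sum_mul_sum
  rw [sum_biasWeight, mul_zero, card_range] at hcheb
  rw [hP', sum_biasD_prior]
  have hn' : (0 : ℝ) < n := by exact_mod_cast hn
  exact nonpos_of_mul_nonpos_right hcheb hn'
end
end

section
/- Let n ≥ 1, η ∈ (0,1), and let P : Finset (Fin n) → ℝ be the binomial prior P T = η^{|T|}·(1−η)^{n−|T|}. Then for every payoff function v : Finset (Fin n) → ℝ and every i: (a) κ_i[v;P] = (2η−1)·ψ_i[v;P]; and (b) the unbiased D-value with bias ratio α = 2η−1, namely ψ̃_i[v;P] = (1−α)·γ_i[v;P] + (1+α)·λ_i[v;P], satisfies ψ̃_i[v;P] = 4(1−η)·γ_i[v;P] = 4η·λ_i[v;P] = 4η(1−η)·ψ_i[v;P] = 4·∑_{T ⊆ Fin n, i ∈ T} η^{|T|}·(1−η)^{n−|T|+1}·(v T − v (T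 \ {i})). -/
/-!
Under the binomial prior, adding `i` to a coalition `T ∌ i` multiplies its weight by
`η / (1 - η)`. Reindexing the loss sum along `T ↦ insert i T` therefore gives
`η · λ_i = (1 - η) · γ_i`, and all five identities are linear consequences of this one.
-/

open Finset

noncomputable section

/-- The unbiased D-value with bias ratio α. -/
def unbD (n : ℕ) (v P : Finset (Fin n) → ℝ) (α : ℝ) (i : Fin n) : ℝ :=
  (1 - α) * gainD n v P i + (1 + α) * lossD n v P i

theorem Finset.sum_filter_notMem_eq_sum_filter_mem_erase {α M : Type*} [Fintype α]
    [DecidableEq α] [AddCommMonoid M] (i : α) (f : Finset α → Finset α → M) :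
    ∑ T ∈ univ.filter (i ∉ ·), f T (insert i T)
      = ∑ T ∈ univ.filter (i ∈ ·), f (T.erase i) T :=
  sum_nbij' (insert i) (·.erase i) (by simp) (by simp)
    (fun T hT => erase_insert (mem_filter.mp hT).2)
    (fun T hT => insert_erase (mem_filter.mp hT).2)
    (fun T hT => by rw [erase_insert (mem_filter.mp hT).2])

theorem mul_binomial_weight_of_notMem {α : Type*} [Fintype α] [DecidableEq α] (η : ℝ)
    {T : Finset α} {i : α} (hi : i ∉ T) :
    η * (η ^ T.card * (1 - η) ^ (Fintype.card α - T.card))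
      = (1 - η) * (η ^ (insert i T).card * (1 - η) ^ (Fintype.card α - (insert i T).card)) := by
  have hlt : T.card < Fintype.card α := card_lt_univ_of_notMem hi
  rw [card_insert_of_notMem hi,
    show Fintype.card α - T.card = Fintype.card α - (T.card + 1) + 1 by omega]
  ring

theorem mul_lossD_of_binomial (n : ℕ) (η : ℝ) (P : Finset (Fin n) → ℝ)
    (hP : ∀ T : Finset (Fin n), P T = η ^ T.card * (1 - η) ^ (n - T.card))
    (v : Finset (Fin n) → ℝ) (i : Fin n) :
    η * lossD n v P i = (1 - η) * gainD n v P i := by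
  rw [lossD_eq_sum_erase, gainD, mul_sum, mul_sum]
  refine sum_congr rfl fun T hT => ?_
  have hi : i ∈ T := (mem_filter.mp hT).2
  have hweight := mul_binomial_weight_of_notMem η (notMem_erase i T)
  rw [insert_erase hi, Fintype.card_fin] at hweight
  rw [hP, hP, ← mul_assoc, hweight, mul_assoc]

theorem stmt_14_general (n : ℕ) (η : ℝ)
    (P : Finset (Fin n) → ℝ)
    (hP : ∀ T : Finset (Fin n), P T = η ^ T.card * (1 - η) ^ (n - T.card))
    (v : Finset (Fin n) → ℝ) (i : Fin n) :
    biasD n v P i = (2 * η - 1) * dVal n v P i ∧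
    unbD n v P (2 * η - 1) i = 4 * (1 - η) * gainD n v P i ∧
    unbD n v P (2 * η - 1) i = 4 * η * lossD n v P i ∧
    unbD n v P (2 * η - 1) i = 4 * η * (1 - η) * dVal n v P i ∧
    unbD n v P (2 * η - 1) i
      = 4 * ∑ T ∈ univ.filter (fun T : Finset (Fin n) => i ∈ T),
          η ^ T.card * (1 - η) ^ (n - T.card + 1) * (v T - v (T.erase i)) := by
  have key := mul_lossD_of_binomial n η P hP v i
  have hsum : ∑ T ∈ univ.filter (fun T : Finset (Fin n) => i ∈ T),
      η ^ T.card * (1 - η) ^ (n - T.card + 1) * (v T - v (T.erase i))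
        = (1 - η) * gainD n v P i := by
    rw [gainD, mul_sum]
    exact sum_congr rfl fun T _ => by rw [hP, pow_succ]; ring
  simp only [biasD, dVal, unbD, hsum]
  refine ⟨?_, ?_, ?_, ?_, ?_⟩
  · linear_combination -2 * key
  · linear_combination 2 * key
  · linear_combination -2 * key
  · linear_combination (4 * η - 2) * key
  · linear_combination 2 * key

theorem stmt_14 (n : ℕ) (hn : 1 ≤ n) (η : ℝ) (hη : η ∈ Set.Ioo (0 : ℝ) 1)
    (P : Finset (Fin n) → ℝ)
    (hP : ∀ T : Finset (Fin n), P T = η ^ T.card * (1 - η) ^ (n - T.card))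
    (v : Finset (Fin n) → ℝ) (i : Fin n) :
    biasD n v P i = (2 * η - 1) * dVal n v P i ∧
    unbD n v P (2 * η - 1) i = 4 * (1 - η) * gainD n v P i ∧
    unbD n v P (2 * η - 1) i = 4 * η * lossD n v P i ∧
    unbD n v P (2 * η - 1) i = 4 * η * (1 - η) * dVal n v P i ∧
    unbD n v P (2 * η - 1) i
      = 4 * ∑ T ∈ univ.filter (fun T : Finset (Fin n) => i ∈ T),
          η ^ T.card * (1 - η) ^ (n - T.card + 1) * (v T - v (T.erase i)) :=
  stmt_14_general n η P hP v i
end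
end

section
/- Let n ≥ 1. For every i ∈ Fin n, the weights on the marginal gains in the unbiased Shapley value sum to 2/3, i.e., ∑_{T ⊆ Fin n, i ∈ T} 4·(|T|)!·(n−|T|+1)!/(n+2)! = 2/3. -/
open Finset

noncomputable section

/-- The unbiased Shapley value Ψ̃_i[v]. -/
def ushapley (n : ℕ) (v : Finset (Fin n) → ℝ) (i : Fin n) : ℝ :=
  4 * ∑ T ∈ univ.filter (fun T : Finset (Fin n) => i ∈ T),
    ((Nat.factorial T.card * Nat.factorial (n - T.card + 1) : ℝ)
        / (Nat.factorial (n + 2) : ℝ)) * (v T - v (T.erase i))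

/-!
The sets `T ∋ i` of size `k + 1` correspond to the `k`-subsets of the other `n - 1` players,
and `(n-1).choose k * (k+1)! * (n-k)! = (n-1)! * (k+1) * (n-k)`. Summing over `k`,
`∑ (k+1)(n-k) = (n+2).choose 3 = (n+2)! / (6 (n-1)!)` (a second Vandermonde identity),
so the weights add up to `4 / 6`.
-/

open Nat

theorem Finset.sum_filter_mem_eq_sum_powerset_erase {α M : Type*} [Fintype α] [DecidableEq α]
    [AddCommMonoid M] (a : α) (g : Finset α → M) :
    ∑ T ∈ univ.filter (a ∈ ·), g T = ∑ S ∈ (univ.erase a).powerset, g (insert a S) := by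
  refine sum_nbij' (·.erase a) (insert a) ?_ ?_ ?_ ?_ ?_
  · simp [erase_subset_erase]
  · simp
  · simp +contextual
  · intro S hS
    exact erase_insert fun ha => by simpa using mem_powerset.1 hS ha
  · simp +contextual

theorem Finset.sum_filter_mem_apply_card {α M : Type*} [Fintype α] [DecidableEq α]
    [AddCommMonoid M] {m : ℕ} (hcard : Fintype.card α = m + 1) (a : α) (f : ℕ → M) :
    ∑ T ∈ univ.filter (a ∈ ·), f #T = ∑ p ∈ antidiagonal m, m.choose p.1 • f (p.1 + 1) := by
  have hm : #(univ.erase a) = m := by simp [card_erase_of_mem, hcard]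
  have hcard_insert : ∀ S ∈ (univ.erase a).powerset, #(insert a S) = #S + 1 := fun S hS =>
    card_insert_of_notMem fun ha => by simpa using mem_powerset.1 hS ha
  rw [sum_filter_mem_eq_sum_powerset_erase, sum_congr rfl fun S hS => by rw [hcard_insert S hS],
    sum_powerset_apply_card (fun k => f (k + 1)), hm]
  exact (Nat.sum_antidiagonal_eq_sum_range_succ_mk (fun p => m.choose p.1 • f (p.1 + 1)) m).symm

theorem Nat.choose_mul_factorial_succ_mul_factorial_succ (a b : ℕ) :
    (a + b).choose a * ((a + 1)! * (b + 1)!) = (a + b)! * ((a + 1) * (b + 1)) := by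
  have h := add_choose_mul_factorial_mul_factorial b a
  rw [add_comm b a] at h
  rw [← h, factorial_succ, factorial_succ]
  ring

theorem Nat.sum_antidiagonal_succ_mul_succ (m : ℕ) :
    ∑ p ∈ antidiagonal m, (p.1 + 1) * (p.2 + 1) = (m + 3).choose 3 := by
  induction m with
  | zero => simp
  | succ m ih =>
    have hgauss : ∑ p ∈ antidiagonal m, (p.2 + 1) = (m + 2).choose 2 := by
      rw [show m + 2 = 1 + m + 1 by ring, ← sum_antidiagonal_choose_add]
      simp [add_comm]
    have hshift : ∑ p ∈ antidiagonal m, (p.1 + 1 + 1) * (p.2 + 1)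
        = (m + 3).choose 3 + (m + 2).choose 2 := by
      rw [← ih, ← hgauss, ← sum_add_distrib]
      exact sum_congr rfl fun p _ => by ring
    rw [sum_antidiagonal_succ, hshift, choose_succ_succ (m + 3) 2, choose_succ_succ (m + 2) 1,
      choose_one_right]
    ring

theorem Nat.six_mul_sum_antidiagonal_choose_mul_factorial (m : ℕ) :
    6 * ∑ p ∈ antidiagonal m, m.choose p.1 * ((p.1 + 1)! * (p.2 + 1)!) = (m + 3)! := by
  have hterm : ∀ p ∈ antidiagonal m,
      m.choose p.1 * ((p.1 + 1)! * (p.2 + 1)!) = m ! * ((p.1 + 1) * (p.2 + 1)) := by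
    rintro ⟨a, b⟩ hab
    rw [HasAntidiagonal.mem_antidiagonal] at hab
    subst hab
    exact choose_mul_factorial_succ_mul_factorial_succ a b
  rw [sum_congr rfl hterm, ← mul_sum, sum_antidiagonal_succ_mul_succ,
    ← add_choose_mul_factorial_mul_factorial m 3]
  simp [factorial]
  ring

theorem stmt_15_general (n : ℕ) (i : Fin n) :
    ∑ T ∈ univ.filter (fun T : Finset (Fin n) => i ∈ T),
      4 * (Nat.factorial T.card * Nat.factorial (n - T.card + 1) : ℝ)
          / (Nat.factorial (n + 2) : ℝ)
      = 2 / 3 := by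
  obtain ⟨m, rfl⟩ : ∃ m, n = m + 1 := Nat.exists_eq_add_one.2 i.pos
  have hweights : ∀ p ∈ antidiagonal m,
      m.choose p.1 • (4 * ((p.1 + 1)! * (m + 1 - (p.1 + 1) + 1)! : ℝ) / (m + 1 + 2)!)
        = (m.choose p.1 * ((p.1 + 1)! * (p.2 + 1)!) : ℕ) * (4 / (m + 3)! : ℝ) := by
    intro p hp
    rw [HasAntidiagonal.mem_antidiagonal] at hp
    rw [show m + 1 - (p.1 + 1) + 1 = p.2 + 1 by omega, nsmul_eq_mul]
    push_cast
    ring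
  have htotal : (6 : ℝ) *
      ((∑ p ∈ antidiagonal m, m.choose p.1 * ((p.1 + 1)! * (p.2 + 1)!) : ℕ) : ℝ) = (m + 3)! := by
    exact_mod_cast six_mul_sum_antidiagonal_choose_mul_factorial m
  rw [sum_filter_mem_apply_card (Fintype.card_fin _) i
      (fun t => 4 * (t ! * (m + 1 - t + 1)! : ℝ) / (m + 1 + 2)!),
    sum_congr rfl hweights, ← sum_mul, ← Nat.cast_sum]
  have hpos : ((m + 3)! : ℝ) ≠ 0 := by positivity
  field_simp
  linarith

theorem stmt_15 (n : ℕ) (hn : 1 ≤ n) (i : Fin n) :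
    ∑ T ∈ univ.filter (fun T : Finset (Fin n) => i ∈ T),
      4 * (Nat.factorial T.card * Nat.factorial (n - T.card + 1) : ℝ)
          / (Nat.factorial (n + 2) : ℝ)
      = 2 / 3 :=
  stmt_15_general n i
end
end

section
/- Let n ≥ 1 and let v : Finset (Fin n) → ℝ be a payoff function. Then the unbiased Shapley values sum to ∑_{i} Ψ̃_i[v] = ∑_{T ⊆ Fin n, |T| > n/2} (4·(|T|)!·(n−|T|)!·(2|T|−n)/(n+2)!) · (v T − v (univ \ T)), where univ is the full set Fin n. -/
/-!
Summing the marginal contributions over all players, a coalition `S` is counted `|S|` times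
as the coalition `T = S` (weight `w |S|`) and `n - |S|` times as `T \ {i}` (weight `w (|S| + 1)`),
where `w k = k! (n - k + 1)! / (n + 2)!`. Factorial algebra turns the net coefficient into
`4 |S|! (n - |S|)! (2|S| - n) / (n + 2)!`, which changes sign under `S ↦ Sᶜ` and hence vanishes
when `2|S| = n`; pairing each `S` with its complement leaves the sum over `|S| > n/2`.
-/

open Finset

noncomputable section

open scoped Nat

theorem Finset.sum_sum_filter_eq_sum_card_smul {α β M : Type*} [Fintype α] [Fintype β]
    [AddCommMonoid M] (p : α → β → Prop) [∀ a b, Decidable (p a b)] (f : β → M) :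
    ∑ a, ∑ b ∈ univ.filter (p a), f b = ∑ b, #(univ.filter (p · b)) • f b := by
  simp_rw [sum_filter]
  rw [sum_comm]
  simp_rw [← sum_filter, sum_const]

theorem Finset.sum_filter_mem_erase {α M : Type*} [Fintype α] [DecidableEq α] [AddCommMonoid M]
    (i : α) (f : Finset α → M) :
    ∑ T ∈ univ.filter (fun T : Finset α => i ∈ T), f (T.erase i)
      = ∑ S ∈ univ.filter (i ∉ ·), f S :=
  sum_nbij' (fun T : Finset α => T.erase i) (insert i) (by simp) (by simp)
    (fun _ hT => insert_erase (mem_filter.1 hT).2) (fun _ hS => erase_insert (mem_filter.1 hS).2)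
    (fun _ _ => rfl)

theorem sum_sum_weighted_marginal {α R : Type*} [Fintype α] [DecidableEq α] [CommRing R]
    (w : ℕ → R) (v : Finset α → R) :
    ∑ i, ∑ T ∈ univ.filter (fun T : Finset α => i ∈ T), w #T * (v T - v (T.erase i))
      = ∑ S, (#S * w #S - #Sᶜ * w (#S + 1)) * v S := by
  have erase_reindex (i : α) :
      ∑ T ∈ univ.filter (fun T : Finset α => i ∈ T), w #T * v (T.erase i)
      = ∑ S ∈ univ.filter (i ∉ ·), w (#S + 1) * v S := by
    rw [← sum_filter_mem_erase i]
    exact sum_congr rfl fun T hT => by rw [card_erase_add_one (mem_filter.1 hT).2]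
  simp_rw [mul_sub, sum_sub_distrib, erase_reindex, sum_sum_filter_eq_sum_card_smul, sub_mul,
    sum_sub_distrib, nsmul_eq_mul, filter_mem_eq_inter, univ_inter, filter_notMem_eq_sdiff,
    ← compl_eq_univ_sdiff, mul_assoc]

theorem Finset.sum_filter_two_mul_card_lt_eq_sum_compl {α M : Type*} [Fintype α] [DecidableEq α]
    [AddCommMonoid M] (f : Finset α → M) :
    ∑ S ∈ univ.filter (fun S : Finset α => 2 * #S < Fintype.card α), f S
      = ∑ T ∈ univ.filter (fun T : Finset α => Fintype.card α < 2 * #T), f Tᶜ := by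
  refine sum_nbij' compl compl (fun S hS => ?_) (fun T hT => ?_) (fun S _ => compl_compl S)
    (fun T _ => compl_compl T) (fun S _ => by rw [compl_compl])
  · have := card_le_univ S
    simp only [mem_filter, mem_univ, true_and, card_compl] at hS ⊢
    omega
  · have := card_le_univ T
    simp only [mem_filter, mem_univ, true_and, card_compl] at hT ⊢
    omega

theorem sum_mul_eq_sum_filter_mul_sub_compl {α R : Type*} [Fintype α] [DecidableEq α] [Ring R]
    [IsAddTorsionFree R] (c : ℕ → R)
    (hc : ∀ k ≤ Fintype.card α, c (Fintype.card α - k) = -c k) (v : Finset α → R) :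
    ∑ S, c #S * v S
      = ∑ S ∈ univ.filter (fun S : Finset α => Fintype.card α < 2 * #S),
          c #S * (v S - v Sᶜ) := by
  set n := Fintype.card α
  have half_vanish (S : Finset α) (hS : 2 * #S = n) : c #S = 0 :=
    self_eq_neg.1 (by simpa [show n - #S = #S by omega] using hc #S (by omega))
  have lower_half : ∑ S ∈ univ.filter (fun S : Finset α => ¬ n < 2 * #S), c #S * v S
      = -∑ T ∈ univ.filter (fun T : Finset α => n < 2 * #T), c #T * v Tᶜ := by
    have drop_middle : ∑ S ∈ univ.filter (fun S : Finset α => 2 * #S < n), c #S * v S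
        = ∑ S ∈ univ.filter (fun S : Finset α => ¬ n < 2 * #S), c #S * v S :=
      sum_subset (fun S hS => by simp only [mem_filter, mem_univ, true_and] at hS ⊢; omega)
        fun S hS hS' => by
          simp only [mem_filter, mem_univ, true_and, not_lt] at hS hS'
          rw [half_vanish S (by omega), zero_mul]
    rw [← drop_middle, sum_filter_two_mul_card_lt_eq_sum_compl, ← sum_neg_distrib]
    refine sum_congr rfl fun T _ => ?_
    rw [card_compl, hc _ (card_le_univ T), neg_mul]
  rw [← sum_filter_add_sum_filter_not univ (fun S : Finset α => n < 2 * #S), lower_half,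
    ← sub_eq_add_neg, ← sum_sub_distrib]
  simp only [mul_sub]

def ushapleyWeight (n k : ℕ) : ℝ := (k ! * (n - k + 1)! : ℝ) / (n + 2)!

def ushapleySumCoeff (n k : ℕ) : ℝ := 4 * (k ! * (n - k)! * (2 * k - n) : ℝ) / (n + 2)!

theorem ushapley_eq_sum_weight (n : ℕ) (v : Finset (Fin n) → ℝ) (i : Fin n) :
    ushapley n v i = 4 * ∑ T ∈ univ.filter (fun T : Finset (Fin n) => i ∈ T),
      ushapleyWeight n #T * (v T - v (T.erase i)) := rfl

theorem four_mul_ushapleyWeight_sub {n k : ℕ} (hk : k ≤ n) :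
    4 * (k * ushapleyWeight n k - (n - k) * ushapleyWeight n (k + 1)) = ushapleySumCoeff n k := by
  obtain ⟨m, rfl⟩ := Nat.exists_eq_add_of_le hk
  rcases m with _ | m
  · simp only [ushapleyWeight, ushapleySumCoeff, add_zero, Nat.sub_self, sub_self, zero_mul,
      sub_zero, zero_add, Nat.factorial_zero, Nat.factorial_one]
    ring
  · simp only [ushapleyWeight, ushapleySumCoeff, Nat.add_sub_cancel_left,
      show k + (m + 1) - (k + 1) + 1 = m + 1 by omega, Nat.factorial_succ]
    push_cast
    ring

theorem ushapleySumCoeff_sub {n k : ℕ} (hk : k ≤ n) :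
    ushapleySumCoeff n (n - k) = -ushapleySumCoeff n k := by
  simp only [ushapleySumCoeff, Nat.sub_sub_self hk, Nat.cast_sub hk]
  ring

theorem stmt_16_general (n : ℕ) (v : Finset (Fin n) → ℝ) :
    ∑ i : Fin n, ushapley n v i
      = ∑ T ∈ univ.filter (fun T : Finset (Fin n) => n < 2 * T.card),
          (4 * (Nat.factorial T.card * Nat.factorial (n - T.card)
                  * (2 * T.card - n) : ℝ) / (Nat.factorial (n + 2) : ℝ))
            * (v T - v (univ \ T)) := by
  calc ∑ i, ushapley n v i = ∑ S : Finset (Fin n), ushapleySumCoeff n #S * v S := by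
        simp_rw [ushapley_eq_sum_weight, ← mul_sum, sum_sum_weighted_marginal, mul_sum,
          ← mul_assoc]
        refine sum_congr rfl fun S _ => ?_
        have hS : #S ≤ n := (card_le_univ S).trans_eq (Fintype.card_fin n)
        rw [card_compl, Fintype.card_fin, Nat.cast_sub hS, four_mul_ushapleyWeight_sub hS]
    _ = _ := by
        rw [sum_mul_eq_sum_filter_mul_sub_compl _ fun k hk => by
          rw [Fintype.card_fin] at hk ⊢; exact ushapleySumCoeff_sub hk]
        simp_rw [Fintype.card_fin, compl_eq_univ_sdiff]
        rfl

theorem stmt_16 (n : ℕ) (hn : 1 ≤ n) (v : Finset (Fin n) → ℝ) :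
    ∑ i : Fin n, ushapley n v i
      = ∑ T ∈ univ.filter (fun T : Finset (Fin n) => n < 2 * T.card),
          (4 * (Nat.factorial T.card * Nat.factorial (n - T.card)
                  * (2 * T.card - n) : ℝ) / (Nat.factorial (n + 2) : ℝ))
            * (v T - v (univ \ T)) :=
  stmt_16_general n v
end
end

section
/- Let n ≥ 1, let P : Finset (Fin n) → ℝ be a probability mass function, and let v : Finset (Fin n) → ℝ be a payoff function. For a permutation σ of Fin n and i ∈ Fin n, let Ξ_i^σ denote the set of elements of Fin n that precede i in the ordering σ (i.e., Ξ_i^σ = {j : σ⁻¹ j < σ⁻¹ i}). Then, averaging uniformly over all n! permutations σ: (a) ψ_i[v;P] = (1/n!)·∑_σ ((P(Ξ_i^σ) + P(Ξ_i^σ ∪ {i}))·n!/((|Ξ_i^σ|)!·(n−|Ξ_i^σ|−1)!)) · (v(Ξ_i^σ ∪ {i}) − v(Ξ_i^σ)); (b) γ_i[v;P] = (1/n!)·∑_σ (n!·P(Ξ_i^σ ∪ {i})/((|Ξ_i^σ|)!·(n−|Ξ_i^σ|−1)!)) · (v(Ξ_i^σ ∪ {i}) − v(Ξ_i^σ)); and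 (c) λ_i[v;P] = (1/n!)·∑_σ (n!·P(Ξ_i^σ)/((|Ξ_i^σ|)!·(n−|Ξ_i^σ|−1)!)) · (v(Ξ_i^σ ∪ {i}) − v(Ξ_i^σ)). -/
/-!
The orderings σ with Ξ_i^σ = S (for i ∉ S) are exactly those that put S in the first |S|
positions, i at position |S| and the remaining players after it. They form a coset of the
stabilizer of the ordered partition S | {i} | rest, so there are |S|! (n - |S| - 1)! of them.
The weight n! / (|S|! (n - |S| - 1)!) therefore turns the average over all n! orderings into
the plain sum over coalitions S ∌ i, which is λ_i for the weight P(S) and, after substituting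
T = S ∪ {i}, γ_i for the weight P(S ∪ {i}).
-/

open Finset

noncomputable section

/-- The set Ξ_i^σ of players preceding i in the ordering σ. -/
def xiSet (n : ℕ) (σ : Equiv.Perm (Fin n)) (i : Fin n) : Finset (Fin n) :=
  univ.filter (fun j => σ.symm j < σ.symm i)


namespace Equiv.Perm

variable {α ι : Type*} [Fintype α] [DecidableEq ι] {f g : α → ι}

theorem exists_comp_eq_of_card_fiber_eq
    (h : ∀ c, Fintype.card {a // f a = c} = Fintype.card {a // g a = c}) :
    ∃ τ : Perm α, f ∘ τ = g := by
  let e : ∀ c, {a // g a = c} ≃ {a // f a = c} := fun c => Fintype.equivOfCardEq (h c).symm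
  exact ⟨(sigmaFiberEquiv g).symm.trans ((Equiv.sigmaCongrRight e).trans (sigmaFiberEquiv f)),
    funext fun a => (e (g a) ⟨a, rfl⟩).2⟩

/-- The permutations carrying `f` to `g` form a coset of the stabilizer of `f`. -/
theorem card_comp_eq_of_card_fiber_eq [DecidableEq α] [Fintype ι]
    (h : ∀ c, Fintype.card {a // f a = c} = Fintype.card {a // g a = c}) :
    Fintype.card {τ : Perm α // f ∘ τ = g} = ∏ c, (Fintype.card {a // f a = c}).factorial := by
  obtain ⟨τ₀, rfl⟩ := exists_comp_eq_of_card_fiber_eq h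
  rw [← DomMulAct.stabilizer_card]
  refine Fintype.card_congr ((Equiv.mulRight τ₀⁻¹).subtypeEquiv fun τ => ?_)
  rw [coe_mulRight, coe_mul, ← Function.comp_assoc, inv_def, Equiv.comp_symm_eq]

end Equiv.Perm

section Blocks

variable {α : Type*} [DecidableEq α]

/-- `blockOf (xiSet n σ i) i j` says whether `j` comes before, is, or comes after `i` in `σ`. -/
def blockOf (S : Finset α) (i j : α) : Ordering :=
  if j ∈ S then .lt else if j = i then .eq else .gt

variable {S : Finset α} {i j : α}

theorem blockOf_eq_lt_iff : blockOf S i j = .lt ↔ j ∈ S := by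
  unfold blockOf; split_ifs <;> simp_all

theorem blockOf_eq_eq_iff (hi : i ∉ S) : blockOf S i j = .eq ↔ j = i := by
  by_cases hj : j = i <;> simp_all [blockOf]

theorem blockOf_eq_gt_iff : blockOf S i j = .gt ↔ j ∉ insert i S := by
  unfold blockOf; split_ifs <;> simp_all

theorem card_fiber_blockOf [Fintype α] (hi : i ∉ S) (c : Ordering) :
    Fintype.card {j // blockOf S i j = c}
      = c.casesOn S.card 1 (Fintype.card α - S.card - 1) := by
  cases c
  · simp only [blockOf_eq_lt_iff, Fintype.card_coe]
  · simp only [blockOf_eq_eq_iff hi, Fintype.card_unique]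
  · simp only [blockOf_eq_gt_iff, ← mem_compl, Fintype.card_coe, card_compl,
      card_insert_of_notMem hi]
    omega

end Blocks

section Predecessors

variable {n : ℕ}

theorem mem_xiSet {σ : Equiv.Perm (Fin n)} {i j : Fin n} :
    j ∈ xiSet n σ i ↔ σ.symm j < σ.symm i := by
  simp [xiSet]

theorem card_xiSet (σ : Equiv.Perm (Fin n)) (i : Fin n) : (xiSet n σ i).card = σ.symm i := by
  have : xiSet n σ i = (Iio (σ.symm i)).map σ.toEmbedding := by
    ext j; simp [mem_xiSet]
  rw [this, card_map, Fin.card_Iio]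

theorem xiSet_eq_iff {σ : Equiv.Perm (Fin n)} {i k : Fin n} {S : Finset (Fin n)} (hi : i ∉ S)
    (hk : S.card = k) : xiSet n σ i = S ↔ blockOf S i ∘ σ = blockOf (Iio k) k := by
  constructor
  · rintro rfl
    have hki : k = σ.symm i := Fin.ext (hk ▸ card_xiSet σ i)
    subst hki
    funext p
    simp [blockOf, mem_xiSet, ← Equiv.eq_symm_apply]
  · intro h
    have hki : σ.symm i = k := by
      have hpos := congrFun h (σ.symm i)
      rw [Function.comp_apply, Equiv.apply_symm_apply, (blockOf_eq_eq_iff hi).2 rfl] at hpos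
      exact (blockOf_eq_eq_iff (by simp)).1 hpos.symm
    ext j
    have hpos := congrFun h (σ.symm j)
    rw [Function.comp_apply, Equiv.apply_symm_apply] at hpos
    rw [mem_xiSet, hki, ← blockOf_eq_lt_iff (S := S) (i := i), hpos, blockOf_eq_lt_iff, mem_Iio]

theorem card_filter_xiSet_eq {i : Fin n} {S : Finset (Fin n)} (hi : i ∉ S) :
    #{σ : Equiv.Perm (Fin n) | xiSet n σ i = S}
      = S.card.factorial * (n - S.card - 1).factorial := by
  have hk : S.card < n := by
    simpa [card_insert_of_notMem hi] using card_le_univ (insert i S)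
  set k : Fin n := ⟨S.card, hk⟩
  have fibers (c : Ordering) : Fintype.card {j // blockOf S i j = c}
      = Fintype.card {p // blockOf (Iio k) k p = c} := by
    rw [card_fiber_blockOf hi, card_fiber_blockOf (by simp), Fin.card_Iio]
  have univ_ordering : (univ : Finset Ordering) = {.lt, .eq, .gt} := rfl
  rw [← Fintype.card_subtype,
    Fintype.card_congr (Equiv.subtypeEquivRight fun σ => xiSet_eq_iff (k := k) hi rfl),
    Equiv.Perm.card_comp_eq_of_card_fiber_eq fibers, univ_ordering, prod_insert (by decide),
    prod_insert (by decide), prod_singleton]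
  simp [card_fiber_blockOf hi]

theorem sum_perm_xiSet (i : Fin n) (f : Finset (Fin n) → ℝ) :
    ∑ σ : Equiv.Perm (Fin n), f (xiSet n σ i)
      = ∑ S with i ∉ S, (S.card.factorial * (n - S.card - 1).factorial : ℝ) * f S := by
  rw [← sum_fiberwise_of_maps_to (g := fun σ => xiSet n σ i) (t := {S | i ∉ S})
    (fun σ _ => by simp [mem_xiSet])]
  refine sum_congr rfl fun S hS => ?_
  rw [sum_congr rfl fun σ hσ => congrArg f (mem_filter.1 hσ).2, sum_const,
    card_filter_xiSet_eq (mem_filter.1 hS).2, nsmul_eq_mul, Nat.cast_mul]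

theorem gainD_eq_sum_insert (v P : Finset (Fin n) → ℝ) (i : Fin n) :
    gainD n v P i = ∑ S with i ∉ S, P (insert i S) * (v (insert i S) - v S) := by
  refine sum_nbij' (·.erase i) (insert i) ?_ ?_ ?_ ?_ ?_ <;> intro T hT <;>
    simp_all [insert_erase]

end Predecessors

theorem stmt_18_general (n : ℕ) (P : Finset (Fin n) → ℝ)
    (v : Finset (Fin n) → ℝ) (i : Fin n) :
    (dVal n v P i
      = (1 / (Nat.factorial n : ℝ)) * ∑ σ : Equiv.Perm (Fin n),
          ((P (xiSet n σ i) + P (insert i (xiSet n σ i))) * (Nat.factorial n : ℝ)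
              / ((Nat.factorial (xiSet n σ i).card : ℝ)
                  * (Nat.factorial (n - (xiSet n σ i).card - 1) : ℝ)))
            * (v (insert i (xiSet n σ i)) - v (xiSet n σ i))) ∧
    (gainD n v P i
      = (1 / (Nat.factorial n : ℝ)) * ∑ σ : Equiv.Perm (Fin n),
          ((Nat.factorial n : ℝ) * P (insert i (xiSet n σ i))
              / ((Nat.factorial (xiSet n σ i).card : ℝ)
                  * (Nat.factorial (n - (xiSet n σ i).card - 1) : ℝ)))
            * (v (insert i (xiSet n σ i)) - v (xiSet n σ i))) ∧
    (lossD n v P i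
      = (1 / (Nat.factorial n : ℝ)) * ∑ σ : Equiv.Perm (Fin n),
          ((Nat.factorial n : ℝ) * P (xiSet n σ i)
              / ((Nat.factorial (xiSet n σ i).card : ℝ)
                  * (Nat.factorial (n - (xiSet n σ i).card - 1) : ℝ)))
            * (v (insert i (xiSet n σ i)) - v (xiSet n σ i))) := by
  have average (w : Finset (Fin n) → ℝ) :
      (1 / (n.factorial : ℝ)) * ∑ σ : Equiv.Perm (Fin n),
          ((n.factorial : ℝ) * w (xiSet n σ i)
              / (((xiSet n σ i).card.factorial : ℝ) * ((n - (xiSet n σ i).card - 1).factorial)))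
            * (v (insert i (xiSet n σ i)) - v (xiSet n σ i))
        = ∑ S with i ∉ S, w S * (v (insert i S) - v S) := by
    rw [sum_perm_xiSet i fun S => ((n.factorial : ℝ) * w S
      / ((S.card.factorial : ℝ) * ((n - S.card - 1).factorial))) * (v (insert i S) - v S), mul_sum]
    refine sum_congr rfl fun S _ => ?_
    field_simp
  have gain := (gainD_eq_sum_insert v P i).trans (average fun S => P (insert i S)).symm
  have loss : lossD n v P i = _ := (average P).symm
  refine ⟨?_, gain, loss⟩
  rw [dVal, gain, loss, ← mul_add, ← sum_add_distrib]
  congr 1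
  refine sum_congr rfl fun σ _ => ?_
  ring

theorem stmt_18 (n : ℕ) (hn : 1 ≤ n) (P : Finset (Fin n) → ℝ)
    (hP0 : ∀ T : Finset (Fin n), 0 ≤ P T)
    (hP1 : ∑ T : Finset (Fin n), P T = 1)
    (v : Finset (Fin n) → ℝ) (i : Fin n) :
    (dVal n v P i
      = (1 / (Nat.factorial n : ℝ)) * ∑ σ : Equiv.Perm (Fin n),
          ((P (xiSet n σ i) + P (insert i (xiSet n σ i))) * (Nat.factorial n : ℝ)
              / ((Nat.factorial (xiSet n σ i).card : ℝ)
                  * (Nat.factorial (n - (xiSet n σ i).card - 1) : ℝ)))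
            * (v (insert i (xiSet n σ i)) - v (xiSet n σ i))) ∧
    (gainD n v P i
      = (1 / (Nat.factorial n : ℝ)) * ∑ σ : Equiv.Perm (Fin n),
          ((Nat.factorial n : ℝ) * P (insert i (xiSet n σ i))
              / ((Nat.factorial (xiSet n σ i).card : ℝ)
                  * (Nat.factorial (n - (xiSet n σ i).card - 1) : ℝ)))
            * (v (insert i (xiSet n σ i)) - v (xiSet n σ i))) ∧
    (lossD n v P i
      = (1 / (Nat.factorial n : ℝ)) * ∑ σ : Equiv.Perm (Fin n),
          ((Nat.factorial n : ℝ) * P (xiSet n σ i)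
              / ((Nat.factorial (xiSet n σ i).card : ℝ)
                  * (Nat.factorial (n - (xiSet n σ i).card - 1) : ℝ)))
            * (v (insert i (xiSet n σ i)) - v (xiSet n σ i))) :=
  stmt_18_general n P v i
end
end
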